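/- arXiv:1405.4668 — 11 statements merged into one kernel-verified Lean document; each statement's English description precedes it below -/
import Mathlib

section
/- Let (t, e) be a counital fusion morphism on an object A of a braided monoidal category C, with induced multiplication m := t ≫ (e ⊗ 1_A) ≫ λ_A. Then (t ⊗ 1_A) ≫ (1_A ⊗ m) = (1_A ⊗ m) ≫ t as morphisms A ⊗ A ⊗ A ⟶ A ⊗ A (suppressing associators). -/
open CategoryTheory Category MonoidalCategory

universe v u

variable {C : Type u} [Category.{v} C] [MonoidalCategory C] [BraidedCategory C]

/-- The fusion equation for `t : A ⊗ A ⟶ A ⊗ A` in a braided monoidal category,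
with all coherence isomorphisms made explicit (domain `A ⊗ (A ⊗ A)`). -/
def FusionEq (A : C) (t : A ⊗ A ⟶ A ⊗ A) : Prop :=
  (A ◁ t) ≫ (α_ A A A).inv ≫ ((β_ A A).hom ▷ A) ≫ (α_ A A A).hom ≫ (A ◁ t) ≫
      (α_ A A A).inv ≫ ((β_ A A).inv ▷ A) ≫ (t ▷ A) ≫ (α_ A A A).hom =
    (α_ A A A).inv ≫ (t ▷ A) ≫ (α_ A A A).hom ≫ (A ◁ t)

/-- The counitality condition `t ≫ (1 ⊗ e) = 1 ⊗ e`. -/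
def Counital (A : C) (t : A ⊗ A ⟶ A ⊗ A) (e : A ⟶ 𝟙_ C) : Prop :=
  t ≫ (A ◁ e) = A ◁ e

/-- The multiplication induced by a counital fusion morphism:
`m := t ≫ (e ⊗ 1) ≫ λ_A`. -/
def mulOf (A : C) (t : A ⊗ A ⟶ A ⊗ A) (e : A ⟶ 𝟙_ C) : A ⊗ A ⟶ A :=
  t ≫ (e ▷ A) ≫ (λ_ A).hom


/-! Post-compose the fusion equation with `1 ⊗ e ⊗ 1`. On the left-hand side counitality removes
the last `t`; the resulting `e` then slides through the inverse braiding to the first strand, past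
the middle `t` by naturality, and back through the braiding to the middle strand, where together
with the first `t` it forms `1 ⊗ m`. -/

section Braided

variable {X Y Z : C} (e : X ⟶ 𝟙_ C)

theorem braiding_hom_whiskerRight_leftUnitor :
    (β_ Y X).hom ≫ (e ▷ Y) ≫ (λ_ Y).hom = (Y ◁ e) ≫ (ρ_ Y).hom := by
  rw [← BraidedCategory.braiding_naturality_right_assoc, braiding_tensorUnit_right]
  monoidal

theorem associator_braiding_whiskerRight_leftUnitor :
    (α_ Y X Z).inv ≫ ((β_ Y X).hom ▷ Z) ≫ (α_ X Y Z).hom ≫ (e ▷ (Y ⊗ Z)) ≫ (λ_ (Y ⊗ Z)).hom =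
      Y ◁ (e ▷ Z ≫ (λ_ Z).hom) := by
  have h := congrArg (· ▷ Z) (braiding_hom_whiskerRight_leftUnitor (Y := Y) e)
  simp only [comp_whiskerRight] at h
  calc _ = (α_ Y X Z).inv ≫ ((β_ Y X).hom ▷ Z) ≫ (e ▷ Y) ▷ Z ≫ (λ_ Y).hom ▷ Z := by monoidal
    _ = _ := by rw [h]; monoidal

theorem associator_braiding_inv_whiskerLeft_leftUnitor :
    (α_ X Y Z).inv ≫ ((β_ Y X).inv ▷ Z) ≫ (α_ Y X Z).hom ≫ Y ◁ (e ▷ Z ≫ (λ_ Z).hom) =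
      (e ▷ (Y ⊗ Z)) ≫ (λ_ (Y ⊗ Z)).hom := by
  rw [← associator_braiding_whiskerRight_leftUnitor e]
  simp

end Braided

omit [BraidedCategory C] in
theorem whiskerLeft_comp_whiskerRight_leftUnitor {X Y Z : C} (e : X ⟶ 𝟙_ C) (f : Y ⟶ Z) :
    (X ◁ f) ≫ (e ▷ Z) ≫ (λ_ Z).hom = (e ▷ Y) ≫ (λ_ Y).hom ≫ f := by
  rw [whisker_exchange_assoc, leftUnitor_naturality]

omit [BraidedCategory C] in
theorem Counital.whiskerRight_whiskerLeft {A : C} {t : A ⊗ A ⟶ A ⊗ A} {e : A ⟶ 𝟙_ C}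
    (hcou : Counital A t e) :
    (t ▷ A) ≫ (α_ A A A).hom ≫ A ◁ (e ▷ A) = (α_ A A A).hom ≫ A ◁ (e ▷ A) := by
  rw [← associator_naturality_middle, ← comp_whiskerRight_assoc, hcou]

/-- For a counital fusion morphism `(t, e)` on `A` with induced multiplication `m`,
one has `(t ⊗ 1) ≫ (1 ⊗ m) = (1 ⊗ m) ≫ t`. -/
theorem whiskerRight_fusion_mul (A : C) (t : A ⊗ A ⟶ A ⊗ A) (e : A ⟶ 𝟙_ C)
    (hfus : FusionEq A t) (hcou : Counital A t e) :
    (t ▷ A) ≫ (α_ A A A).hom ≫ (A ◁ mulOf A t e) =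
      (α_ A A A).hom ≫ (A ◁ mulOf A t e) ≫ t := by
  rw [← cancel_epi (α_ A A A).inv]
  calc (α_ A A A).inv ≫ (t ▷ A) ≫ (α_ A A A).hom ≫ A ◁ mulOf A t e
      = ((α_ A A A).inv ≫ (t ▷ A) ≫ (α_ A A A).hom ≫ (A ◁ t)) ≫
          A ◁ (e ▷ A ≫ (λ_ A).hom) := by simp [mulOf]
    _ = (A ◁ t) ≫ ((α_ A A A).inv ≫ ((β_ A A).hom ▷ A) ≫ (α_ A A A).hom) ≫ (A ◁ t) ≫
          (α_ A A A).inv ≫ ((β_ A A).inv ▷ A) ≫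
          ((t ▷ A) ≫ (α_ A A A).hom ≫ A ◁ (e ▷ A)) ≫ A ◁ (λ_ A).hom := by
      rw [← hfus]; simp
    _ = (A ◁ t) ≫ ((α_ A A A).inv ≫ ((β_ A A).hom ▷ A) ≫ (α_ A A A).hom) ≫ (A ◁ t) ≫
          (e ▷ (A ⊗ A)) ≫ (λ_ (A ⊗ A)).hom := by
      rw [hcou.whiskerRight_whiskerLeft,
        ← associator_braiding_inv_whiskerLeft_leftUnitor e]
      simp
    _ = (A ◁ t) ≫ (α_ A A A).inv ≫ ((β_ A A).hom ▷ A) ≫ (α_ A A A).hom ≫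
          (e ▷ (A ⊗ A)) ≫ (λ_ (A ⊗ A)).hom ≫ t := by
      rw [whiskerLeft_comp_whiskerRight_leftUnitor]; simp
    _ = (A ◁ t) ≫ A ◁ (e ▷ A ≫ (λ_ A).hom) ≫ t := by
      rw [reassoc_of% associator_braiding_whiskerRight_leftUnitor e]
    _ = (α_ A A A).inv ≫ (α_ A A A).hom ≫ (A ◁ mulOf A t e) ≫ t := by simp [mulOf]
end

section
/- Let (t, e) be a counital fusion morphism on an object A of a braided monoidal category C, with induced multiplication m := t ≫ (e ⊗ 1_A) ≫ λ_A. Then e is multiplicative: m ≫ e = (e ⊗ e) ≫ λ_I as morphisms A ⊗ A ⟶ I (where λ_I : I ⊗ I ≅ I is the unitor). -/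
open CategoryTheory Category MonoidalCategory

universe v u

variable {C : Type u} [Category.{v} C] [MonoidalCategory C] [BraidedCategory C]

section

variable {D : Type*} [Category D] [MonoidalCategory D]

lemma whiskerRight_comp_leftUnitor_hom_comp {X Y : D} (f : X ⟶ 𝟙_ D) (g : Y ⟶ 𝟙_ D) :
    (f ▷ Y) ≫ (λ_ Y).hom ≫ g = (f ⊗ₘ g) ≫ (λ_ (𝟙_ D)).hom := by
  rw [← leftUnitor_naturality, tensorHom_def', assoc, ← whisker_exchange_assoc]

lemma Counital.comp_tensorHom {A : D} {t : A ⊗ A ⟶ A ⊗ A} {e : A ⟶ 𝟙_ D}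
    (hcou : Counital A t e) : t ≫ (e ⊗ₘ e) = e ⊗ₘ e := by
  rw [tensorHom_def', reassoc_of% hcou]

end

theorem counit_mul_general (A : C) (t : A ⊗ A ⟶ A ⊗ A) (e : A ⟶ 𝟙_ C)
    (hcou : Counital A t e) :
    mulOf A t e ≫ e = (e ⊗ₘ e) ≫ (λ_ (𝟙_ C)).hom := by
  rw [mulOf, assoc, assoc, whiskerRight_comp_leftUnitor_hom_comp, reassoc_of% hcou.comp_tensorHom]

/-- For a counital fusion morphism `(t, e)` on `A` with induced multiplication `m`,
the counit is multiplicative: `m ≫ e = (e ⊗ e) ≫ λ_I`. -/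
theorem counit_mul (A : C) (t : A ⊗ A ⟶ A ⊗ A) (e : A ⟶ 𝟙_ C)
    (hfus : FusionEq A t) (hcou : Counital A t e) :
    mulOf A t e ≫ e = (e ⊗ₘ e) ≫ (λ_ (𝟙_ C)).hom :=
  counit_mul_general A t e hcou
end

section
/- Let A be a bimonoid in a braided monoidal category C, with multiplication m : A ⊗ A ⟶ A, unit u : I ⟶ A, comultiplication d : A ⟶ A ⊗ A and counit e : A ⟶ I. Then t := (d ⊗ 1_A) ≫ (1_A ⊗ m) : A ⊗ A ⟶ A ⊗ A together with e is a counital fusion morphism, i.e. t satisfies the fusion equation (1_A ⊗ t) ≫ (b_{A,A} ⊗ 1_A) ≫ (1_A ⊗ t) ≫ (b_{A,A}⁻¹ ⊗ 1_A) ≫ (t ⊗ 1_A) = (t ⊗ 1_A) ≫ (1_A ⊗ t) and the counitality condition t ≫ (1_A ⊗ e) = 1_A ⊗ e. -/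
open CategoryTheory Category MonoidalCategory

universe v u

variable {C : Type u} [Category.{v} C] [MonoidalCategory C] [BraidedCategory C]

/-
In Sweedler notation `t (a ⊗ b) = a₁ ⊗ a₂ b`. Both sides of the fusion equation send
`a ⊗ b ⊗ c` to `a₁ ⊗ a₂ b₁ ⊗ a₃ b₂ c`, where `a₃` crosses `b₁`. For `t₂₃ t₁₂` this is
multiplicativity of the comultiplication, `Δ (a₂ b) = a₂ b₁ ⊗ a₃ b₂`, plus associativity.
For `t₁₂ t₁₃ t₂₃`, the braided conjugate `t₁₃` only lets `a₂` cross `b`, the two copies of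
`Δ` applied to `a` are merged by coassociativity, and associativity regroups `a₂ (b₂ c)`.
Counitality is `a₁ ε (a₂ b) = a ε (b)`.
-/

theorem braiding_hom_whiskerLeft_braiding_inv {X Y Z W : C} (f : X ⟶ Y ⊗ Z) :
    (β_ X W).hom ≫ W ◁ f ≫ (α_ W Y Z).inv ≫ (β_ Y W).inv ▷ Z =
      f ▷ W ≫ (α_ Y Z W).hom ≫ Y ◁ (β_ Z W).hom ≫ (α_ Y W Z).inv := by
  rw [← BraidedCategory.braiding_naturality_left_assoc,
    BraidedCategory.braiding_tensor_left_hom]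
  simp

section Fusion

variable {A : C}

omit [BraidedCategory C] in
def fusionMap (m : A ⊗ A ⟶ A) (d : A ⟶ A ⊗ A) : A ⊗ A ⟶ A ⊗ A :=
  d ▷ A ≫ (α_ A A A).hom ≫ A ◁ m

-- `a ⊗ (b ⊗ c) ↦ b ⊗ a c`, braiding `a` past `b` first
def braidedMul (m : A ⊗ A ⟶ A) : A ⊗ (A ⊗ A) ⟶ A ⊗ A :=
  (α_ A A A).inv ≫ (β_ A A).hom ▷ A ≫ (α_ A A A).hom ≫ A ◁ m

theorem braiding_conj_whiskerLeft_fusionMap (m : A ⊗ A ⟶ A) (d : A ⟶ A ⊗ A) :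
    (α_ A A A).inv ≫ (β_ A A).hom ▷ A ≫ (α_ A A A).hom ≫ A ◁ fusionMap m d ≫
        (α_ A A A).inv ≫ (β_ A A).inv ▷ A =
      d ▷ (A ⊗ A) ≫ (α_ A A (A ⊗ A)).hom ≫ A ◁ braidedMul m ≫ (α_ A A A).inv := by
  calc _ = (α_ A A A).inv ≫
        ((β_ A A).hom ≫ A ◁ d ≫ (α_ A A A).inv ≫ (β_ A A).inv ▷ A) ▷ A ≫
          (α_ (A ⊗ A) A A).hom ≫ (A ⊗ A) ◁ m := by
        simp only [fusionMap, whiskerLeft_comp, assoc]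
        rw [associator_inv_naturality_right_assoc, whisker_exchange]
        monoidal
    _ = _ := by
        rw [braiding_hom_whiskerLeft_braiding_inv, braidedMul]
        monoidal

theorem whiskerLeft_fusionMap_comp_braidedMul {m : A ⊗ A ⟶ A} (d : A ⟶ A ⊗ A)
    (mul_assoc : (m ▷ A) ≫ m = (α_ A A A).hom ≫ (A ◁ m) ≫ m) :
    A ◁ fusionMap m d ≫ braidedMul m =
      (α_ A A A).inv ≫ (A ◁ d ≫ braidedMul m) ▷ A ≫ (α_ A A A).hom ≫ A ◁ m := by
  simp only [fusionMap, braidedMul, whiskerLeft_comp, comp_whiskerRight, assoc]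
  rw [associator_naturality_middle_assoc, ← whiskerLeft_comp, mul_assoc,
    associator_inv_naturality_right_assoc, whisker_exchange_assoc]
  monoidal

theorem mul_comul_eq_braidedMul {m : A ⊗ A ⟶ A} {d : A ⟶ A ⊗ A}
    (mul_comul : m ≫ d =
      (d ⊗ₘ d) ≫ (α_ A A (A ⊗ A)).hom ≫ (A ◁ (α_ A A A).inv) ≫
        (A ◁ ((β_ A A).hom ▷ A)) ≫ (A ◁ (α_ A A A).hom) ≫
        (α_ A A (A ⊗ A)).inv ≫ (m ⊗ₘ m)) :
    m ≫ d = d ▷ A ≫ (α_ A A A).hom ≫ A ◁ (A ◁ d ≫ braidedMul m) ≫ (α_ A A A).inv ≫ m ▷ A := by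
  rw [mul_comul, tensorHom_def d d, tensorHom_def' m m, braidedMul]
  monoidal

omit [BraidedCategory C] in
theorem fusionMap_whiskerRight_comp_whiskerLeft (m : A ⊗ A ⟶ A) (d : A ⟶ A ⊗ A) :
    (α_ A A A).inv ≫ fusionMap m d ▷ A ≫ (α_ A A A).hom ≫ A ◁ fusionMap m d =
      d ▷ (A ⊗ A) ≫ (α_ A A (A ⊗ A)).hom ≫
        A ◁ ((α_ A A A).inv ≫ (m ≫ d) ▷ A ≫ (α_ A A A).hom ≫ A ◁ m) := by
  simp only [fusionMap]
  monoidal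

theorem fusionEq_fusionMap {m : A ⊗ A ⟶ A} {d : A ⟶ A ⊗ A}
    (mul_assoc : (m ▷ A) ≫ m = (α_ A A A).hom ≫ (A ◁ m) ≫ m)
    (comul_assoc : d ≫ (A ◁ d) = d ≫ (d ▷ A) ≫ (α_ A A A).hom)
    (mul_comul : m ≫ d =
      (d ⊗ₘ d) ≫ (α_ A A (A ⊗ A)).hom ≫ (A ◁ (α_ A A A).inv) ≫
        (A ◁ ((β_ A A).hom ▷ A)) ≫ (A ◁ (α_ A A A).hom) ≫
        (α_ A A (A ⊗ A)).inv ≫ (m ⊗ₘ m)) :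
    FusionEq A (fusionMap m d) := by
  have comul_assoc' : d ≫ d ▷ A = d ≫ A ◁ d ≫ (α_ A A A).inv := by
    rw [reassoc_of% comul_assoc, Iso.hom_inv_id, comp_id]
  -- `K (a ⊗ (b ⊗ c)) = b₁ ⊗ a b₂ c`
  let K := (α_ A A A).inv ≫ (A ◁ d ≫ braidedMul m) ▷ A ≫ (α_ A A A).hom ≫ A ◁ m
  calc _ = d ▷ (A ⊗ A) ≫ (α_ A A (A ⊗ A)).hom ≫ A ◁ K ≫ (α_ A A A).inv ≫
        fusionMap m d ▷ A ≫ (α_ A A A).hom := by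
        rw [reassoc_of% braiding_conj_whiskerLeft_fusionMap, whisker_exchange_assoc,
          associator_naturality_right_assoc, ← whiskerLeft_comp_assoc,
          whiskerLeft_fusionMap_comp_braidedMul d mul_assoc]
    _ = (d ≫ A ◁ d ≫ (α_ A A A).inv) ▷ (A ⊗ A) ≫ (α_ (A ⊗ A) A (A ⊗ A)).hom ≫
        (A ⊗ A) ◁ K ≫ (α_ (A ⊗ A) A A).inv ≫ ((α_ A A A).hom ≫ A ◁ m) ▷ A ≫
          (α_ A A A).hom := by
        rw [← comul_assoc', fusionMap]
        simp only [comp_whiskerRight, assoc]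
        rw [← associator_inv_naturality_left_assoc, whisker_exchange_assoc]
        monoidal
    _ = d ▷ (A ⊗ A) ≫ (α_ A A (A ⊗ A)).hom ≫
        A ◁ ((α_ A A A).inv ≫ (m ≫ d) ▷ A ≫ (α_ A A A).hom ≫ A ◁ m) := by
        rw [mul_comul_eq_braidedMul mul_comul]
        simp only [K, comp_whiskerRight, assoc]
        rw [associator_naturality_left_assoc, ← whisker_exchange]
        monoidal
    _ = _ := (fusionMap_whiskerRight_comp_whiskerLeft m d).symm

omit [BraidedCategory C] in
theorem counital_fusionMap {m : A ⊗ A ⟶ A} {d : A ⟶ A ⊗ A} {e : A ⟶ 𝟙_ C}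
    (comul_counit : d ≫ (A ◁ e) = (ρ_ A).inv)
    (mul_counit : m ≫ e = (e ⊗ₘ e) ≫ (λ_ (𝟙_ C)).hom) :
    Counital A (fusionMap m d) e :=
  calc fusionMap m d ≫ A ◁ e = (d ≫ A ◁ e) ▷ A ≫ (ρ_ A).hom ▷ A ≫ A ◁ e := by
        rw [fusionMap, assoc, assoc, ← whiskerLeft_comp, mul_counit, tensorHom_def e e]
        monoidal
    _ = A ◁ e := by
        rw [comul_counit]
        monoidal

end Fusion

theorem bimonoid_counitalFusion_general (A : C)
    (m : A ⊗ A ⟶ A) (d : A ⟶ A ⊗ A) (e : A ⟶ 𝟙_ C)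
    -- monoid axioms
    (mul_assoc : (m ▷ A) ≫ m = (α_ A A A).hom ≫ (A ◁ m) ≫ m)
    -- comonoid axioms
    (comul_assoc : d ≫ (A ◁ d) = d ≫ (d ▷ A) ≫ (α_ A A A).hom)
    (comul_counit : d ≫ (A ◁ e) = (ρ_ A).inv)
    -- `d` and `e` are monoid morphisms (bimonoid compatibility)
    (mul_comul : m ≫ d =
      (d ⊗ₘ d) ≫ (α_ A A (A ⊗ A)).hom ≫ (A ◁ (α_ A A A).inv) ≫
        (A ◁ ((β_ A A).hom ▷ A)) ≫ (A ◁ (α_ A A A).hom) ≫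
        (α_ A A (A ⊗ A)).inv ≫ (m ⊗ₘ m))
    (mul_counit : m ≫ e = (e ⊗ₘ e) ≫ (λ_ (𝟙_ C)).hom) :
    FusionEq A ((d ▷ A) ≫ (α_ A A A).hom ≫ (A ◁ m)) ∧
      Counital A ((d ▷ A) ≫ (α_ A A A).hom ≫ (A ◁ m)) e :=
  ⟨fusionEq_fusionMap mul_assoc comul_assoc mul_comul,
    counital_fusionMap comul_counit mul_counit⟩

/-- If `A` is a bimonoid in a braided monoidal category (monoid `(m, u)`, comonoid
`(d, e)`, with `d` and `e` monoid morphisms, the monoid structure on `A ⊗ A` using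
the braiding), then `t := (d ⊗ 1) ≫ (1 ⊗ m)` is a counital fusion morphism with
counit `e`. -/
theorem bimonoid_counitalFusion (A : C)
    (m : A ⊗ A ⟶ A) (u : 𝟙_ C ⟶ A) (d : A ⟶ A ⊗ A) (e : A ⟶ 𝟙_ C)
    -- monoid axioms
    (mul_assoc : (m ▷ A) ≫ m = (α_ A A A).hom ≫ (A ◁ m) ≫ m)
    (one_mul : (u ▷ A) ≫ m = (λ_ A).hom)
    (mul_one : (A ◁ u) ≫ m = (ρ_ A).hom)
    -- comonoid axioms
    (comul_assoc : d ≫ (A ◁ d) = d ≫ (d ▷ A) ≫ (α_ A A A).hom)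
    (counit_comul : d ≫ (e ▷ A) = (λ_ A).inv)
    (comul_counit : d ≫ (A ◁ e) = (ρ_ A).inv)
    -- `d` and `e` are monoid morphisms (bimonoid compatibility)
    (mul_comul : m ≫ d =
      (d ⊗ₘ d) ≫ (α_ A A (A ⊗ A)).hom ≫ (A ◁ (α_ A A A).inv) ≫
        (A ◁ ((β_ A A).hom ▷ A)) ≫ (A ◁ (α_ A A A).hom) ≫
        (α_ A A (A ⊗ A)).inv ≫ (m ⊗ₘ m))
    (mul_counit : m ≫ e = (e ⊗ₘ e) ≫ (λ_ (𝟙_ C)).hom)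
    (one_comul : u ≫ d = (λ_ (𝟙_ C)).inv ≫ (u ⊗ₘ u))
    (one_counit : u ≫ e = 𝟙 (𝟙_ C)) :
    FusionEq A ((d ▷ A) ≫ (α_ A A A).hom ≫ (A ◁ m)) ∧
      Counital A ((d ▷ A) ≫ (α_ A A A).hom ≫ (A ◁ m)) e :=
  bimonoid_counitalFusion_general A m d e mul_assoc comul_assoc comul_counit mul_comul mul_counit
end

section
/- Let A be a bimonoid in a braided monoidal category C, with multiplication m, unit u, comultiplication d and counit e. Set t₁ := (d ⊗ 1_A) ≫ (1_A ⊗ m) and t₂ := (1_A ⊗ d) ≫ (m ⊗ 1_A), both A ⊗ A ⟶ A ⊗ A. Then (t₁, t₂, e) is a multiplier bimonoid in C: t₁ is a counital fusion morphism in C, t₂ satisfies the reversed fusion equation (t₂ ⊗ 1_A) ≫ (1_A ⊗ b_{A,A}) ≫ (t₂ ⊗ 1_A) ≫ (1_A ⊗ b_{A,A}⁻¹) ≫ (1_A ⊗ t₂) = (1_A ⊗ t₂) ≫ (t₂ ⊗ 1_A) and the reversed counitality t₂ ≫ (e ⊗ 1_A) = e ⊗ 1_A, and moreover (t₂ ⊗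 1_A) ≫ (1_A ⊗ t₁) = (1_A ⊗ t₁) ≫ (t₂ ⊗ 1_A) and t₁ ≫ (e ⊗ 1_A) = t₂ ≫ (1_A ⊗ e) (as morphisms A ⊗ A ⟶ A after composing with unitors). -/
/-!
In Sweedler notation `t₁ = fusionMorphism m d` is `a ⊗ b ↦ a₍₁₎ ⊗ a₍₂₎ b` and
`t₂ = revFusionMorphism m d` is `a ⊗ b ↦ a b₍₁₎ ⊗ b₍₂₎`.
Both sides of the fusion equation for `t₁` send `a ⊗ b ⊗ c` to
`a₍₁₎ ⊗ a₍₂₎ b₍₁₎ ⊗ a₍₃₎ b₍₂₎ c`: for the side containing the braidings this is naturality of the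
braiding alone, for the other side it is multiplicativity of `d` together with associativity and
coassociativity. Since `t₂` is `t₁` computed in the monoidal opposite, where `A` is again a
bimonoid, the reversed conditions on `t₂` are the conditions on `t₁` read in `Cᴹᵒᵖ`.
-/

open CategoryTheory Category MonoidalCategory

universe v u

variable {C : Type u} [Category.{v} C] [MonoidalCategory C] [BraidedCategory C]

/-- The fusion equation in the reverse monoidal category `C^rev`, expressed in `C`
(domain `(A ⊗ A) ⊗ A`). -/
def RevFusionEq (A : C) (t : A ⊗ A ⟶ A ⊗ A) : Prop :=
  (t ▷ A) ≫ (α_ A A A).hom ≫ (A ◁ (β_ A A).hom) ≫ (α_ A A A).inv ≫ (t ▷ A) ≫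
      (α_ A A A).hom ≫ (A ◁ (β_ A A).inv) ≫ (A ◁ t) ≫ (α_ A A A).inv =
    (α_ A A A).hom ≫ (A ◁ t) ≫ (α_ A A A).inv ≫ (t ▷ A)

def RevCounital (A : C) (t : A ⊗ A ⟶ A ⊗ A) (e : A ⟶ 𝟙_ C) : Prop :=
  t ≫ (e ▷ A) = e ▷ A

def CompatEq (A : C) (t₁ t₂ : A ⊗ A ⟶ A ⊗ A) : Prop :=
  (t₂ ▷ A) ≫ (α_ A A A).hom ≫ (A ◁ t₁) ≫ (α_ A A A).inv =
    (α_ A A A).hom ≫ (A ◁ t₁) ≫ (α_ A A A).inv ≫ (t₂ ▷ A)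

open MonoidalOpposite

section Monoidal

variable {D : Type*} [Category D] [MonoidalCategory D] {A : D}

def fusionMorphism (m : A ⊗ A ⟶ A) (d : A ⟶ A ⊗ A) : A ⊗ A ⟶ A ⊗ A :=
  (d ▷ A) ≫ (α_ A A A).hom ≫ (A ◁ m)

def revFusionMorphism (m : A ⊗ A ⟶ A) (d : A ⟶ A ⊗ A) : A ⊗ A ⟶ A ⊗ A :=
  (A ◁ d) ≫ (α_ A A A).inv ≫ (m ▷ A)

theorem revCounital_iff_counital_mop (t : A ⊗ A ⟶ A ⊗ A) (e : A ⟶ 𝟙_ D) :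
    RevCounital A t e ↔ Counital (mop A) t.mop e.mop :=
  ⟨fun h => Quiver.Hom.unmop_inj h, fun h => congrArg Quiver.Hom.unmop h⟩

theorem counital_fusionMorphism {m : A ⊗ A ⟶ A} {d : A ⟶ A ⊗ A} {e : A ⟶ 𝟙_ D}
    (comul_counit : d ≫ (A ◁ e) = (ρ_ A).inv)
    (mul_counit : m ≫ e = (e ⊗ₘ e) ≫ (λ_ (𝟙_ D)).hom) :
    Counital A (fusionMorphism m d) e := by
  calc
    _ = 𝟙 (A ⊗ A) ⊗≫ (d ▷ A) ⊗≫ (A ◁ (m ≫ e)) ⊗≫ 𝟙 (A ⊗ 𝟙_ D) := by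
      unfold fusionMorphism; monoidal
    _ = 𝟙 (A ⊗ A) ⊗≫ ((d ≫ (A ◁ e)) ▷ A) ⊗≫ (A ◁ e) ⊗≫ 𝟙 (A ⊗ 𝟙_ D) := by
      rw [mul_counit, MonoidalCategory.tensorHom_def]; monoidal
    _ = A ◁ e := by
      rw [comul_counit]; monoidal

theorem revCounital_revFusionMorphism {m : A ⊗ A ⟶ A} {d : A ⟶ A ⊗ A} {e : A ⟶ 𝟙_ D}
    (counit_comul : d ≫ (e ▷ A) = (λ_ A).inv)
    (mul_counit : m ≫ e = (e ⊗ₘ e) ≫ (λ_ (𝟙_ D)).hom) :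
    RevCounital A (revFusionMorphism m d) e := by
  rw [revCounital_iff_counital_mop]
  refine counital_fusionMorphism (m := m.mop) (d := d.mop) ?_ ?_ <;> apply Quiver.Hom.unmop_inj
  · exact counit_comul
  · simp [mul_counit, unitors_equal]

theorem compatEq_fusionMorphism_revFusionMorphism {m : A ⊗ A ⟶ A} {d : A ⟶ A ⊗ A}
    (comul_assoc : d ≫ (A ◁ d) = d ≫ (d ▷ A) ≫ (α_ A A A).hom) :
    CompatEq A (fusionMorphism m d) (revFusionMorphism m d) := by
  unfold CompatEq fusionMorphism revFusionMorphism
  calc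
    _ = 𝟙 ((A ⊗ A) ⊗ A) ⊗≫ ((A ◁ d) ▷ A) ⊗≫ (((m ▷ A) ≫ (A ◁ d)) ▷ A) ⊗≫ (A ◁ A ◁ m) ⊗≫
          𝟙 ((A ⊗ A) ⊗ A) := by
      monoidal
    _ = 𝟙 ((A ⊗ A) ⊗ A) ⊗≫ ((A ◁ (d ≫ (A ◁ d))) ▷ A) ⊗≫
          ((m ▷ (A ⊗ (A ⊗ A))) ≫ (A ◁ A ◁ m)) ⊗≫ 𝟙 ((A ⊗ A) ⊗ A) := by
      rw [← whisker_exchange]; monoidal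
    _ = 𝟙 ((A ⊗ A) ⊗ A) ⊗≫ (A ◁ (d ▷ A)) ⊗≫ (A ◁ ((d ▷ (A ⊗ A)) ≫ ((A ⊗ A) ◁ m))) ⊗≫
          (m ▷ (A ⊗ A)) ⊗≫ 𝟙 ((A ⊗ A) ⊗ A) := by
      rw [comul_assoc, ← whisker_exchange]; monoidal
    _ = 𝟙 ((A ⊗ A) ⊗ A) ⊗≫ (A ◁ (d ▷ A)) ⊗≫ (A ◁ ((A ◁ m) ≫ (d ▷ A))) ⊗≫
          (m ▷ (A ⊗ A)) ⊗≫ 𝟙 ((A ⊗ A) ⊗ A) := by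
      rw [← whisker_exchange]
    _ = _ := by monoidal

theorem fusionMorphism_counit_eq_mul {m : A ⊗ A ⟶ A} {d : A ⟶ A ⊗ A} {e : A ⟶ 𝟙_ D}
    (counit_comul : d ≫ (e ▷ A) = (λ_ A).inv) :
    fusionMorphism m d ≫ (e ▷ A) ≫ (λ_ A).hom = m := by
  calc
    _ = 𝟙 (A ⊗ A) ⊗≫ (d ▷ A) ⊗≫ ((A ◁ m) ≫ (e ▷ A)) ⊗≫ 𝟙 A := by
      unfold fusionMorphism; monoidal
    _ = 𝟙 (A ⊗ A) ⊗≫ ((d ≫ (e ▷ A)) ▷ A) ⊗≫ (𝟙_ D ◁ m) ⊗≫ 𝟙 A := by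
      rw [whisker_exchange]; monoidal
    _ = m := by
      rw [counit_comul]; monoidal

theorem revFusionMorphism_counit_eq_mul {m : A ⊗ A ⟶ A} {d : A ⟶ A ⊗ A} {e : A ⟶ 𝟙_ D}
    (comul_counit : d ≫ (A ◁ e) = (ρ_ A).inv) :
    revFusionMorphism m d ≫ (A ◁ e) ≫ (ρ_ A).hom = m :=
  congrArg Quiver.Hom.unmop
    (fusionMorphism_counit_eq_mul (m := m.mop) (d := d.mop) (e := e.mop)
      (Quiver.Hom.unmop_inj comul_counit))

end Monoidal

section Braided

variable {D : Type*} [Category D] [MonoidalCategory D] [BraidedCategory D] {A : D}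

theorem revFusionEq_iff_fusionEq_mop (t : A ⊗ A ⟶ A ⊗ A) :
    RevFusionEq A t ↔ FusionEq (mop A) t.mop :=
  ⟨fun h => Quiver.Hom.unmop_inj h, fun h => congrArg Quiver.Hom.unmop h⟩

/-- In Sweedler notation, `a ⊗ b ⊗ c ↦ a₍₁₎₍₁₎ ⊗ a₍₁₎₍₂₎ b₍₁₎ ⊗ a₍₂₎ (b₍₂₎ c)`. -/
def fusionExpansion (m : A ⊗ A ⟶ A) (d : A ⟶ A ⊗ A) : A ⊗ (A ⊗ A) ⟶ A ⊗ (A ⊗ A) :=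
  𝟙 _ ⊗≫ ((d ≫ (d ▷ A)) ▷ (A ⊗ A)) ⊗≫ (((A ⊗ A) ⊗ A) ◁ (d ▷ A)) ⊗≫
    (A ◁ A ◁ ((β_ A A).hom ▷ (A ⊗ A))) ⊗≫ (A ◁ (m ▷ (A ⊗ (A ⊗ A)))) ⊗≫
    ((A ⊗ (A ⊗ A)) ◁ m) ⊗≫ ((A ⊗ A) ◁ m) ⊗≫ 𝟙 _

theorem braiding_conj_whiskerLeft_fusionMorphism (m : A ⊗ A ⟶ A) (d : A ⟶ A ⊗ A) :
    ((β_ A A).hom ▷ A) ≫ (α_ A A A).hom ≫ (A ◁ fusionMorphism m d) ≫ (α_ A A A).inv ≫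
      ((β_ A A).inv ▷ A) =
    𝟙 ((A ⊗ A) ⊗ A) ⊗≫ ((d ▷ A) ▷ A) ⊗≫ ((A ◁ (β_ A A).hom) ▷ A) ⊗≫ (A ◁ A ◁ m) ⊗≫
      𝟙 ((A ⊗ A) ⊗ A) := by
  unfold fusionMorphism
  calc
    _ = 𝟙 ((A ⊗ A) ⊗ A) ⊗≫ (((β_ A A).hom ≫ (A ◁ d)) ▷ A) ⊗≫ (A ◁ A ◁ m) ⊗≫
          ((β_ A A).inv ▷ A) ⊗≫ 𝟙 ((A ⊗ A) ⊗ A) := by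
      monoidal
    _ = 𝟙 ((A ⊗ A) ⊗ A) ⊗≫ (((d ▷ A) ≫ (β_ (A ⊗ A) A).hom) ▷ A) ⊗≫ (A ◁ A ◁ m) ⊗≫
          ((β_ A A).inv ▷ A) ⊗≫ 𝟙 ((A ⊗ A) ⊗ A) := by
      rw [← BraidedCategory.braiding_naturality_left]
    _ = 𝟙 ((A ⊗ A) ⊗ A) ⊗≫ ((d ▷ A) ▷ A) ⊗≫ ((A ◁ (β_ A A).hom) ▷ A) ⊗≫
          (((β_ A A).hom ▷ (A ⊗ A)) ≫ ((A ⊗ A) ◁ m)) ⊗≫ ((β_ A A).inv ▷ A) ⊗≫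
          𝟙 ((A ⊗ A) ⊗ A) := by
      rw [BraidedCategory.braiding_tensor_left_hom]; monoidal
    _ = 𝟙 ((A ⊗ A) ⊗ A) ⊗≫ ((d ▷ A) ▷ A) ⊗≫ ((A ◁ (β_ A A).hom) ▷ A) ⊗≫
          (((A ⊗ A) ◁ m) ≫ (((β_ A A).hom ≫ (β_ A A).inv) ▷ A)) ⊗≫ 𝟙 ((A ⊗ A) ⊗ A) := by
      rw [← whisker_exchange]; monoidal
    _ = _ := by rw [Iso.hom_inv_id]; monoidal

theorem fusionMorphism_fusionEq_lhs (m : A ⊗ A ⟶ A) (d : A ⟶ A ⊗ A) :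
    (A ◁ fusionMorphism m d) ≫ (α_ A A A).inv ≫ ((β_ A A).hom ▷ A) ≫ (α_ A A A).hom ≫
      (A ◁ fusionMorphism m d) ≫ (α_ A A A).inv ≫ ((β_ A A).inv ▷ A) ≫
      (fusionMorphism m d ▷ A) ≫ (α_ A A A).hom = fusionExpansion m d := by
  set t := fusionMorphism m d with ht
  rw [reassoc_of% (braiding_conj_whiskerLeft_fusionMorphism m d)]
  calc
    _ = 𝟙 (A ⊗ (A ⊗ A)) ⊗≫ ((A ◁ t) ≫ (d ▷ (A ⊗ A))) ⊗≫ ((A ◁ (β_ A A).hom) ▷ A) ⊗≫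
          (A ◁ A ◁ m) ⊗≫ (t ▷ A) ⊗≫ 𝟙 (A ⊗ (A ⊗ A)) := by
      monoidal
    _ = 𝟙 (A ⊗ (A ⊗ A)) ⊗≫ (d ▷ (A ⊗ A)) ⊗≫
          (A ◁ ((A ◁ t) ⊗≫ ((β_ A A).hom ▷ A) ⊗≫ (A ◁ m)) ≫ (d ▷ (A ⊗ A))) ⊗≫
          ((A ◁ m) ▷ A) ⊗≫ 𝟙 (A ⊗ (A ⊗ A)) := by
      rw [whisker_exchange, ht, fusionMorphism]; monoidal
    _ = 𝟙 (A ⊗ (A ⊗ A)) ⊗≫ ((d ≫ (d ▷ A)) ▷ (A ⊗ A)) ⊗≫ (((A ⊗ A) ⊗ A) ◁ (d ▷ A)) ⊗≫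
          (A ◁ A ◁ (((A ⊗ A) ◁ m) ≫ ((β_ A A).hom ▷ A))) ⊗≫ (A ◁ A ◁ A ◁ m) ⊗≫
          ((A ◁ m) ▷ A) ⊗≫ 𝟙 (A ⊗ (A ⊗ A)) := by
      rw [whisker_exchange, ht, fusionMorphism]; monoidal
    _ = 𝟙 (A ⊗ (A ⊗ A)) ⊗≫ ((d ≫ (d ▷ A)) ▷ (A ⊗ A)) ⊗≫ (((A ⊗ A) ⊗ A) ◁ (d ▷ A)) ⊗≫
          (A ◁ A ◁ ((β_ A A).hom ▷ (A ⊗ A))) ⊗≫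
          (((A ⊗ (A ⊗ A)) ◁ ((A ◁ m) ≫ m)) ≫ ((A ◁ m) ▷ A)) ⊗≫ 𝟙 (A ⊗ (A ⊗ A)) := by
      rw [whisker_exchange]; monoidal
    _ = fusionExpansion m d := by
      rw [whisker_exchange, fusionExpansion]; monoidal

theorem fusionMorphism_fusionEq_rhs {m : A ⊗ A ⟶ A} {d : A ⟶ A ⊗ A}
    (mul_assoc : (m ▷ A) ≫ m = (α_ A A A).hom ≫ (A ◁ m) ≫ m)
    (comul_assoc : d ≫ (A ◁ d) = d ≫ (d ▷ A) ≫ (α_ A A A).hom)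
    (mul_comul : m ≫ d =
      (d ⊗ₘ d) ≫ (α_ A A (A ⊗ A)).hom ≫ (A ◁ (α_ A A A).inv) ≫
        (A ◁ ((β_ A A).hom ▷ A)) ≫ (A ◁ (α_ A A A).hom) ≫
        (α_ A A (A ⊗ A)).inv ≫ (m ⊗ₘ m)) :
    (α_ A A A).inv ≫ (fusionMorphism m d ▷ A) ≫ (α_ A A A).hom ≫ (A ◁ fusionMorphism m d) =
      fusionExpansion m d := by
  calc
    _ = 𝟙 (A ⊗ (A ⊗ A)) ⊗≫ (d ▷ (A ⊗ A)) ⊗≫ (A ◁ ((m ≫ d) ▷ A)) ⊗≫ (A ◁ A ◁ m) ⊗≫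
          𝟙 (A ⊗ (A ⊗ A)) := by
      unfold fusionMorphism; monoidal
    _ = 𝟙 (A ⊗ (A ⊗ A)) ⊗≫ ((d ≫ (A ◁ d)) ▷ (A ⊗ A)) ⊗≫ (((A ⊗ A) ⊗ A) ◁ (d ▷ A)) ⊗≫
          (A ◁ A ◁ ((β_ A A).hom ▷ (A ⊗ A))) ⊗≫ (A ◁ (m ▷ (A ⊗ (A ⊗ A)))) ⊗≫
          ((A ⊗ A) ◁ ((m ▷ A) ≫ m)) ⊗≫ 𝟙 (A ⊗ (A ⊗ A)) := by
      rw [mul_comul, tensorHom_def d d, tensorHom_def m m]; monoidal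
    _ = fusionExpansion m d := by
      rw [comul_assoc, mul_assoc, fusionExpansion]; monoidal

theorem fusionEq_fusionMorphism {m : A ⊗ A ⟶ A} {d : A ⟶ A ⊗ A}
    (mul_assoc : (m ▷ A) ≫ m = (α_ A A A).hom ≫ (A ◁ m) ≫ m)
    (comul_assoc : d ≫ (A ◁ d) = d ≫ (d ▷ A) ≫ (α_ A A A).hom)
    (mul_comul : m ≫ d =
      (d ⊗ₘ d) ≫ (α_ A A (A ⊗ A)).hom ≫ (A ◁ (α_ A A A).inv) ≫
        (A ◁ ((β_ A A).hom ▷ A)) ≫ (A ◁ (α_ A A A).hom) ≫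
        (α_ A A (A ⊗ A)).inv ≫ (m ⊗ₘ m)) :
    FusionEq A (fusionMorphism m d) := by
  rw [FusionEq, fusionMorphism_fusionEq_lhs,
    fusionMorphism_fusionEq_rhs mul_assoc comul_assoc mul_comul]

theorem revFusionEq_revFusionMorphism {m : A ⊗ A ⟶ A} {d : A ⟶ A ⊗ A}
    (mul_assoc : (m ▷ A) ≫ m = (α_ A A A).hom ≫ (A ◁ m) ≫ m)
    (comul_assoc : d ≫ (A ◁ d) = d ≫ (d ▷ A) ≫ (α_ A A A).hom)
    (mul_comul : m ≫ d =
      (d ⊗ₘ d) ≫ (α_ A A (A ⊗ A)).hom ≫ (A ◁ (α_ A A A).inv) ≫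
        (A ◁ ((β_ A A).hom ▷ A)) ≫ (A ◁ (α_ A A A).hom) ≫
        (α_ A A (A ⊗ A)).inv ≫ (m ⊗ₘ m)) :
    RevFusionEq A (revFusionMorphism m d) := by
  rw [revFusionEq_iff_fusionEq_mop]
  refine fusionEq_fusionMorphism (m := m.mop) (d := d.mop) ?_ ?_ ?_ <;>
    apply Quiver.Hom.unmop_inj <;>
    simp only [unmop_comp, unmop_whiskerRight, unmop_whiskerLeft, Quiver.Hom.unmop_mop,
      unmop_hom_associator, unmop_inv_associator, unmop_tensorHom, unmop_hom_braiding]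
  · simp [mul_assoc]
  · simp [reassoc_of% comul_assoc]
  · rw [mul_comul, tensorHom_def d d, tensorHom_def m m]
    monoidal

end Braided

theorem bimonoid_multiplierBimonoid_general (A : C)
    (m : A ⊗ A ⟶ A) (d : A ⟶ A ⊗ A) (e : A ⟶ 𝟙_ C)
    -- monoid axioms
    (mul_assoc : (m ▷ A) ≫ m = (α_ A A A).hom ≫ (A ◁ m) ≫ m)
    -- comonoid axioms
    (comul_assoc : d ≫ (A ◁ d) = d ≫ (d ▷ A) ≫ (α_ A A A).hom)
    (counit_comul : d ≫ (e ▷ A) = (λ_ A).inv)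
    (comul_counit : d ≫ (A ◁ e) = (ρ_ A).inv)
    -- `d` and `e` are monoid morphisms (bimonoid compatibility)
    (mul_comul : m ≫ d =
      (d ⊗ₘ d) ≫ (α_ A A (A ⊗ A)).hom ≫ (A ◁ (α_ A A A).inv) ≫
        (A ◁ ((β_ A A).hom ▷ A)) ≫ (A ◁ (α_ A A A).hom) ≫
        (α_ A A (A ⊗ A)).inv ≫ (m ⊗ₘ m))
    (mul_counit : m ≫ e = (e ⊗ₘ e) ≫ (λ_ (𝟙_ C)).hom) :
    FusionEq A ((d ▷ A) ≫ (α_ A A A).hom ≫ (A ◁ m)) ∧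
    Counital A ((d ▷ A) ≫ (α_ A A A).hom ≫ (A ◁ m)) e ∧
    RevFusionEq A ((A ◁ d) ≫ (α_ A A A).inv ≫ (m ▷ A)) ∧
    RevCounital A ((A ◁ d) ≫ (α_ A A A).inv ≫ (m ▷ A)) e ∧
    CompatEq A ((d ▷ A) ≫ (α_ A A A).hom ≫ (A ◁ m))
      ((A ◁ d) ≫ (α_ A A A).inv ≫ (m ▷ A)) ∧
    ((d ▷ A) ≫ (α_ A A A).hom ≫ (A ◁ m)) ≫ (e ▷ A) ≫ (λ_ A).hom =
      ((A ◁ d) ≫ (α_ A A A).inv ≫ (m ▷ A)) ≫ (A ◁ e) ≫ (ρ_ A).hom :=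
  ⟨fusionEq_fusionMorphism mul_assoc comul_assoc mul_comul,
    counital_fusionMorphism comul_counit mul_counit,
    revFusionEq_revFusionMorphism mul_assoc comul_assoc mul_comul,
    revCounital_revFusionMorphism counit_comul mul_counit,
    compatEq_fusionMorphism_revFusionMorphism comul_assoc,
    (fusionMorphism_counit_eq_mul counit_comul).trans
      (revFusionMorphism_counit_eq_mul comul_counit).symm⟩

/-- For a bimonoid `A`, the morphisms `t₁ := (d ⊗ 1) ≫ (1 ⊗ m)` and
`t₂ := (1 ⊗ d) ≫ (m ⊗ 1)` together with the counit `e` form a multiplier bimonoid. -/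
theorem bimonoid_multiplierBimonoid (A : C)
    (m : A ⊗ A ⟶ A) (u : 𝟙_ C ⟶ A) (d : A ⟶ A ⊗ A) (e : A ⟶ 𝟙_ C)
    -- monoid axioms
    (mul_assoc : (m ▷ A) ≫ m = (α_ A A A).hom ≫ (A ◁ m) ≫ m)
    (one_mul : (u ▷ A) ≫ m = (λ_ A).hom)
    (mul_one : (A ◁ u) ≫ m = (ρ_ A).hom)
    -- comonoid axioms
    (comul_assoc : d ≫ (A ◁ d) = d ≫ (d ▷ A) ≫ (α_ A A A).hom)
    (counit_comul : d ≫ (e ▷ A) = (λ_ A).inv)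
    (comul_counit : d ≫ (A ◁ e) = (ρ_ A).inv)
    -- `d` and `e` are monoid morphisms (bimonoid compatibility)
    (mul_comul : m ≫ d =
      (d ⊗ₘ d) ≫ (α_ A A (A ⊗ A)).hom ≫ (A ◁ (α_ A A A).inv) ≫
        (A ◁ ((β_ A A).hom ▷ A)) ≫ (A ◁ (α_ A A A).hom) ≫
        (α_ A A (A ⊗ A)).inv ≫ (m ⊗ₘ m))
    (mul_counit : m ≫ e = (e ⊗ₘ e) ≫ (λ_ (𝟙_ C)).hom)
    (one_comul : u ≫ d = (λ_ (𝟙_ C)).inv ≫ (u ⊗ₘ u))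
    (one_counit : u ≫ e = 𝟙 (𝟙_ C)) :
    FusionEq A ((d ▷ A) ≫ (α_ A A A).hom ≫ (A ◁ m)) ∧
    Counital A ((d ▷ A) ≫ (α_ A A A).hom ≫ (A ◁ m)) e ∧
    RevFusionEq A ((A ◁ d) ≫ (α_ A A A).inv ≫ (m ▷ A)) ∧
    RevCounital A ((A ◁ d) ≫ (α_ A A A).inv ≫ (m ▷ A)) e ∧
    CompatEq A ((d ▷ A) ≫ (α_ A A A).hom ≫ (A ◁ m))
      ((A ◁ d) ≫ (α_ A A A).inv ≫ (m ▷ A)) ∧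
    ((d ▷ A) ≫ (α_ A A A).hom ≫ (A ◁ m)) ≫ (e ▷ A) ≫ (λ_ A).hom =
      ((A ◁ d) ≫ (α_ A A A).inv ≫ (m ▷ A)) ≫ (A ◁ e) ≫ (ρ_ A).hom :=
  bimonoid_multiplierBimonoid_general A m d e mul_assoc comul_assoc counit_comul comul_counit
    mul_comul mul_counit
end

section
/- Let (G, Ǧ₂, ε) be a right multiplier bicomonad on a monoidal category C, and let (V, v̌) and (W, w̌) be G-comodules. Then V ⊗ W is a G-comodule via the natural transformation x̌_Y := (1_V ⊗ w̌_Y) ≫ v̌_{W ⊗ Y} : V ⊗ W ⊗ GY ⟶ G(V ⊗ W ⊗ Y); that is, x̌ satisfies (1_{V⊗W} ⊗ Ǧ₂^{Y,Z}) ≫ x̌_{GY⊗Z} ≫ G(x̌_Y ⊗ 1_Z) = (x̌_Y ⊗ 1_{GZ}) ≫ Ǧ₂^{V⊗W⊗Y, Z} and x̌_Y ≫ ε_{V⊗W⊗Y} = 1_{V⊗W} ⊗ ε_Y. -/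
/-!
Coassociativity of `x̌` is the coassociativity of `w̌`, whiskered by `V` and pushed through
`v̌` by naturality of `v̌`, followed by the coassociativity of `v̌` at `W ⊗ Y` and naturality of
`Ǧ₂` for the associator `V ⊗ (W ⊗ Y) ≅ (V ⊗ W) ⊗ Y`; the counit law stacks those of `v̌`
and `w̌`. All remaining steps are monoidal coherence.
-/

open CategoryTheory Category MonoidalCategory

universe v u

variable {C : Type u} [Category.{v} C] [MonoidalCategory C]

namespace RightMultiplierBicomonad

variable (G : C ⥤ C) {V W : C}

def tensorCoaction (v : ∀ Y : C, V ⊗ G.obj Y ⟶ G.obj (V ⊗ Y))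
    (w : ∀ Y : C, W ⊗ G.obj Y ⟶ G.obj (W ⊗ Y)) (Y : C) :
    (V ⊗ W) ⊗ G.obj Y ⟶ G.obj ((V ⊗ W) ⊗ Y) :=
  (α_ V W (G.obj Y)).hom ≫ (V ◁ w Y) ≫ v (W ⊗ Y) ≫ G.map (α_ V W Y).inv

variable {G}

theorem tensorCoaction_counit (ε : ∀ X : C, G.obj X ⟶ X)
    (hεnat : ∀ {X Y : C} (f : X ⟶ Y), G.map f ≫ ε Y = ε X ≫ f)
    {v : ∀ Y : C, V ⊗ G.obj Y ⟶ G.obj (V ⊗ Y)} (hve : ∀ Y : C, v Y ≫ ε (V ⊗ Y) = V ◁ ε Y)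
    {w : ∀ Y : C, W ⊗ G.obj Y ⟶ G.obj (W ⊗ Y)} (hwe : ∀ Y : C, w Y ≫ ε (W ⊗ Y) = W ◁ ε Y)
    (Y : C) : tensorCoaction G v w Y ≫ ε ((V ⊗ W) ⊗ Y) = (V ⊗ W) ◁ ε Y := by
  simp only [tensorCoaction, assoc, hεnat, reassoc_of% hve, ← whiskerLeft_comp_assoc, hwe]
  monoidal

theorem tensorCoaction_coassoc (G₂ : ∀ X Y : C, G.obj X ⊗ G.obj Y ⟶ G.obj (G.obj X ⊗ Y))
    (hG₂nat : ∀ {X X' Y Y' : C} (f : X ⟶ X') (g : Y ⟶ Y'),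
      (G.map f ⊗ₘ G.map g) ≫ G₂ X' Y' = G₂ X Y ≫ G.map (G.map f ⊗ₘ g))
    {v : ∀ Y : C, V ⊗ G.obj Y ⟶ G.obj (V ⊗ Y)}
    (hvnat : ∀ {Y Y' : C} (g : Y ⟶ Y'),
      (V ◁ G.map g) ≫ v Y' = v Y ≫ G.map (V ◁ g))
    (hv : ∀ Y Z : C,
      (α_ V (G.obj Y) (G.obj Z)).hom ≫ (V ◁ G₂ Y Z) ≫ v (G.obj Y ⊗ Z) ≫
          G.map ((α_ V (G.obj Y) Z).inv ≫ (v Y ▷ Z)) =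
        (v Y ▷ G.obj Z) ≫ G₂ (V ⊗ Y) Z)
    {w : ∀ Y : C, W ⊗ G.obj Y ⟶ G.obj (W ⊗ Y)}
    (hw : ∀ Y Z : C,
      (α_ W (G.obj Y) (G.obj Z)).hom ≫ (W ◁ G₂ Y Z) ≫ w (G.obj Y ⊗ Z) ≫
          G.map ((α_ W (G.obj Y) Z).inv ≫ (w Y ▷ Z)) =
        (w Y ▷ G.obj Z) ≫ G₂ (W ⊗ Y) Z) (Y Z : C) :
    (α_ (V ⊗ W) (G.obj Y) (G.obj Z)).hom ≫ ((V ⊗ W) ◁ G₂ Y Z) ≫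
          tensorCoaction G v w (G.obj Y ⊗ Z) ≫
          G.map ((α_ (V ⊗ W) (G.obj Y) Z).inv ≫ (tensorCoaction G v w Y ▷ Z)) =
        (tensorCoaction G v w Y ▷ G.obj Z) ≫ G₂ ((V ⊗ W) ⊗ Y) Z := by
  calc _ = (α_ V W (G.obj Y)).hom ▷ G.obj Z ≫ (α_ V (W ⊗ G.obj Y) (G.obj Z)).hom ≫
        V ◁ ((α_ W (G.obj Y) (G.obj Z)).hom ≫ (W ◁ G₂ Y Z) ≫ w (G.obj Y ⊗ Z) ≫
          G.map ((α_ W (G.obj Y) Z).inv ≫ (w Y ▷ Z))) ≫ v _ ≫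
        G.map ((α_ V _ Z).inv ≫ v (W ⊗ Y) ▷ Z ≫ G.map (α_ V W Y).inv ▷ Z) := by
        simp only [tensorCoaction, whiskerLeft_comp, assoc, reassoc_of% hvnat, ← G.map_comp]
        have hpre : (α_ (V ⊗ W) (G.obj Y) (G.obj Z)).hom ≫ (V ⊗ W) ◁ G₂ Y Z ≫
            (α_ V W (G.obj (G.obj Y ⊗ Z))).hom =
            (α_ V W (G.obj Y)).hom ▷ G.obj Z ≫ (α_ V (W ⊗ G.obj Y) (G.obj Z)).hom ≫
              V ◁ (α_ W (G.obj Y) (G.obj Z)).hom ≫ V ◁ W ◁ G₂ Y Z := by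
          monoidal
        have hpost : (α_ V W (G.obj Y ⊗ Z)).inv ≫ (α_ (V ⊗ W) (G.obj Y) Z).inv ≫
            ((α_ V W (G.obj Y)).hom ≫ V ◁ w Y ≫ v (W ⊗ Y) ≫ G.map (α_ V W Y).inv) ▷ Z =
            V ◁ (α_ W (G.obj Y) Z).inv ≫ V ◁ w Y ▷ Z ≫ (α_ V (G.obj (W ⊗ Y)) Z).inv ≫
              v (W ⊗ Y) ▷ Z ≫ G.map (α_ V W Y).inv ▷ Z := by
          monoidal
        rw [reassoc_of% hpre, hpost]
    _ = ((α_ V W (G.obj Y)).hom ≫ V ◁ w Y) ▷ G.obj Z ≫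
        ((α_ V (G.obj (W ⊗ Y)) (G.obj Z)).hom ≫ (V ◁ G₂ (W ⊗ Y) Z) ≫ v (G.obj (W ⊗ Y) ⊗ Z) ≫
          G.map ((α_ V (G.obj (W ⊗ Y)) Z).inv ≫ (v (W ⊗ Y) ▷ Z))) ≫
        G.map (G.map (α_ V W Y).inv ▷ Z) := by
        rw [hw]; simp only [Functor.map_comp]; monoidal
    _ = _ := by
        have hG₂ := hG₂nat (α_ V W Y).inv (𝟙 Z)
        rw [G.map_id, tensorHom_id, tensorHom_id] at hG₂
        rw [hv, assoc, ← hG₂, tensorCoaction]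
        simp only [comp_whiskerRight, assoc]

end RightMultiplierBicomonad

theorem comodule_tensor_of_rightMultiplierBicomonad_general
    (G : C ⥤ C)
    (G₂ : ∀ X Y : C, G.obj X ⊗ G.obj Y ⟶ G.obj (G.obj X ⊗ Y))
    (ε : ∀ X : C, G.obj X ⟶ X)
    -- naturality of `Ǧ₂` and `ε`
    (hG₂nat : ∀ {X X' Y Y' : C} (f : X ⟶ X') (g : Y ⟶ Y'),
      (G.map f ⊗ₘ G.map g) ≫ G₂ X' Y' = G₂ X Y ≫ G.map (G.map f ⊗ₘ g))
    (hεnat : ∀ {X Y : C} (f : X ⟶ Y), G.map f ≫ ε Y = ε X ≫ f)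
    -- a comodule `(V, v̌)`
    (V : C) (v : ∀ Y : C, V ⊗ G.obj Y ⟶ G.obj (V ⊗ Y))
    (hvnat : ∀ {Y Y' : C} (g : Y ⟶ Y'),
      (V ◁ G.map g) ≫ v Y' = v Y ≫ G.map (V ◁ g))
    (hv : ∀ Y Z : C,
      (α_ V (G.obj Y) (G.obj Z)).hom ≫ (V ◁ G₂ Y Z) ≫ v (G.obj Y ⊗ Z) ≫
          G.map ((α_ V (G.obj Y) Z).inv ≫ (v Y ▷ Z)) =
        (v Y ▷ G.obj Z) ≫ G₂ (V ⊗ Y) Z)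
    (hve : ∀ Y : C, v Y ≫ ε (V ⊗ Y) = V ◁ ε Y)
    -- a comodule `(W, w̌)`
    (W : C) (w : ∀ Y : C, W ⊗ G.obj Y ⟶ G.obj (W ⊗ Y))
    (hw : ∀ Y Z : C,
      (α_ W (G.obj Y) (G.obj Z)).hom ≫ (W ◁ G₂ Y Z) ≫ w (G.obj Y ⊗ Z) ≫
          G.map ((α_ W (G.obj Y) Z).inv ≫ (w Y ▷ Z)) =
        (w Y ▷ G.obj Z) ≫ G₂ (W ⊗ Y) Z)
    (hwe : ∀ Y : C, w Y ≫ ε (W ⊗ Y) = W ◁ ε Y)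
    -- the candidate comodule structure on `V ⊗ W`
    (x : ∀ Y : C, (V ⊗ W) ⊗ G.obj Y ⟶ G.obj ((V ⊗ W) ⊗ Y))
    (hx : ∀ Y : C, x Y =
      (α_ V W (G.obj Y)).hom ≫ (V ◁ w Y) ≫ v (W ⊗ Y) ≫ G.map (α_ V W Y).inv) :
    (∀ Y Z : C,
      (α_ (V ⊗ W) (G.obj Y) (G.obj Z)).hom ≫ ((V ⊗ W) ◁ G₂ Y Z) ≫
          x (G.obj Y ⊗ Z) ≫
          G.map ((α_ (V ⊗ W) (G.obj Y) Z).inv ≫ (x Y ▷ Z)) =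
        (x Y ▷ G.obj Z) ≫ G₂ ((V ⊗ W) ⊗ Y) Z) ∧
    (∀ Y : C, x Y ≫ ε ((V ⊗ W) ⊗ Y) = (V ⊗ W) ◁ ε Y) := by
  obtain rfl : x = RightMultiplierBicomonad.tensorCoaction G v w := funext hx
  exact ⟨RightMultiplierBicomonad.tensorCoaction_coassoc G₂ hG₂nat hvnat hv hw,
    RightMultiplierBicomonad.tensorCoaction_counit ε hεnat hve hwe⟩

/-- The monoidal product of two comodules over a right multiplier bicomonad
`(G, Ǧ₂, ε)` is again a comodule, via `x̌_Y := (1_V ⊗ w̌_Y) ≫ v̌_{W ⊗ Y}`. -/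
theorem comodule_tensor_of_rightMultiplierBicomonad
    (G : C ⥤ C)
    (G₂ : ∀ X Y : C, G.obj X ⊗ G.obj Y ⟶ G.obj (G.obj X ⊗ Y))
    (ε : ∀ X : C, G.obj X ⟶ X)
    -- naturality of `Ǧ₂` and `ε`
    (hG₂nat : ∀ {X X' Y Y' : C} (f : X ⟶ X') (g : Y ⟶ Y'),
      (G.map f ⊗ₘ G.map g) ≫ G₂ X' Y' = G₂ X Y ≫ G.map (G.map f ⊗ₘ g))
    (hεnat : ∀ {X Y : C} (f : X ⟶ Y), G.map f ≫ ε Y = ε X ≫ f)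
    -- the right multiplier bicomonad axioms
    (hGassoc : ∀ X Y Z : C,
      (α_ (G.obj X) (G.obj Y) (G.obj Z)).hom ≫ (G.obj X ◁ G₂ Y Z) ≫
          G₂ X (G.obj Y ⊗ Z) ≫
          G.map ((α_ (G.obj X) (G.obj Y) Z).inv ≫ (G₂ X Y ▷ Z)) =
        (G₂ X Y ▷ G.obj Z) ≫ G₂ (G.obj X ⊗ Y) Z)
    (hGcou : ∀ X Y : C, G₂ X Y ≫ ε (G.obj X ⊗ Y) = G.obj X ◁ ε Y)
    -- a comodule `(V, v̌)`
    (V : C) (v : ∀ Y : C, V ⊗ G.obj Y ⟶ G.obj (V ⊗ Y))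
    (hvnat : ∀ {Y Y' : C} (g : Y ⟶ Y'),
      (V ◁ G.map g) ≫ v Y' = v Y ≫ G.map (V ◁ g))
    (hv : ∀ Y Z : C,
      (α_ V (G.obj Y) (G.obj Z)).hom ≫ (V ◁ G₂ Y Z) ≫ v (G.obj Y ⊗ Z) ≫
          G.map ((α_ V (G.obj Y) Z).inv ≫ (v Y ▷ Z)) =
        (v Y ▷ G.obj Z) ≫ G₂ (V ⊗ Y) Z)
    (hve : ∀ Y : C, v Y ≫ ε (V ⊗ Y) = V ◁ ε Y)
    -- a comodule `(W, w̌)`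
    (W : C) (w : ∀ Y : C, W ⊗ G.obj Y ⟶ G.obj (W ⊗ Y))
    (hwnat : ∀ {Y Y' : C} (g : Y ⟶ Y'),
      (W ◁ G.map g) ≫ w Y' = w Y ≫ G.map (W ◁ g))
    (hw : ∀ Y Z : C,
      (α_ W (G.obj Y) (G.obj Z)).hom ≫ (W ◁ G₂ Y Z) ≫ w (G.obj Y ⊗ Z) ≫
          G.map ((α_ W (G.obj Y) Z).inv ≫ (w Y ▷ Z)) =
        (w Y ▷ G.obj Z) ≫ G₂ (W ⊗ Y) Z)
    (hwe : ∀ Y : C, w Y ≫ ε (W ⊗ Y) = W ◁ ε Y)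
    -- the candidate comodule structure on `V ⊗ W`
    (x : ∀ Y : C, (V ⊗ W) ⊗ G.obj Y ⟶ G.obj ((V ⊗ W) ⊗ Y))
    (hx : ∀ Y : C, x Y =
      (α_ V W (G.obj Y)).hom ≫ (V ◁ w Y) ≫ v (W ⊗ Y) ≫ G.map (α_ V W Y).inv) :
    (∀ Y Z : C,
      (α_ (V ⊗ W) (G.obj Y) (G.obj Z)).hom ≫ ((V ⊗ W) ◁ G₂ Y Z) ≫
          x (G.obj Y ⊗ Z) ≫
          G.map ((α_ (V ⊗ W) (G.obj Y) Z).inv ≫ (x Y ▷ Z)) =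
        (x Y ▷ G.obj Z) ≫ G₂ ((V ⊗ W) ⊗ Y) Z) ∧
    (∀ Y : C, x Y ≫ ε ((V ⊗ W) ⊗ Y) = (V ⊗ W) ◁ ε Y) :=
  comodule_tensor_of_rightMultiplierBicomonad_general G G₂ ε hG₂nat hεnat V v hvnat hv hve W w hw
    hwe x hx
end

section
/- Let (T, T̂₂, T₀) be a left multiplier bimonad on a monoidal category C such that T₀ : TI ⟶ I and, for all objects X, Y, the composite T(TX ⊗ TY) —T̂₂^{TX,Y}→ T(TX) ⊗ TY —(T̂₂^{I,X} ⊗ 1, after identifying T²X = T(I ⊗ TX))→ TI ⊗ TX ⊗ TY —(T₀ ⊗ 1 ⊗ 1)→ TX ⊗ TY are split epimorphisms. Let q̂ : T(– ⊗ Q) ⟶ T(–) ⊗ Q and p̂ : T(– ⊗ P) ⟶ T(–) ⊗ P be T-modules. Then r̂_X := q̂_{X⊗P} ≫ (p̂_X ⊗ 1_Q) : T(X ⊗ P ⊗ Q) ⟶ TX ⊗ P ⊗ Q is a T-module structure on P ⊗ Q: it satisfies the module fusion equation T(1_X ⊗ r̂_Y) ≫ r̂_{X⊗TY} ≫ (T̂₂^{X,Y}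 ⊗ 1_{P⊗Q}) = T̂₂^{X, Y⊗P⊗Q} ≫ (1_{TX} ⊗ r̂_Y), and the induced morphism r̂_I ≫ (T₀ ⊗ 1_{P⊗Q}) : T(P ⊗ Q) ⟶ P ⊗ Q is a split epimorphism. -/
open CategoryTheory Category MonoidalCategory

universe v u

variable {C : Type u} [Category.{v} C] [MonoidalCategory C]

/-- The monoidal product of two modules over a left multiplier bimonad
`(T, T̂₂, T₀)` is again a module, via `r̂_X := q̂_{X⊗P} ≫ (p̂_X ⊗ 1_Q)`,
provided `T₀` and the canonical morphisms `T(TX ⊗ TY) ⟶ TX ⊗ TY` are split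
epimorphisms. -/
theorem module_tensor_of_leftMultiplierBimonad
    (T : C ⥤ C)
    (T₂ : ∀ X Y : C, T.obj (X ⊗ T.obj Y) ⟶ T.obj X ⊗ T.obj Y)
    (T₀ : T.obj (𝟙_ C) ⟶ 𝟙_ C)
    -- naturality of `T̂₂`
    (hT₂nat : ∀ {X X' Y Y' : C} (f : X ⟶ X') (g : Y ⟶ Y'),
      T.map (f ⊗ₘ T.map g) ≫ T₂ X' Y' = T₂ X Y ≫ (T.map f ⊗ₘ T.map g))
    -- the left multiplier bimonad axioms
    (hTassoc : ∀ X Y Z : C,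
      T.map ((X ◁ T₂ Y Z) ≫ (α_ X (T.obj Y) (T.obj Z)).inv) ≫
          T₂ (X ⊗ T.obj Y) Z ≫ (T₂ X Y ▷ T.obj Z) =
        T₂ X (Y ⊗ T.obj Z) ≫ (T.obj X ◁ T₂ Y Z) ≫
          (α_ (T.obj X) (T.obj Y) (T.obj Z)).inv)
    (hTcou : ∀ X : C,
      T₂ X (𝟙_ C) ≫ (T.obj X ◁ T₀) ≫ (ρ_ (T.obj X)).hom =
        T.map ((X ◁ T₀) ≫ (ρ_ X).hom))
    -- the split-epimorphism assumptions
    (hT₀ : IsSplitEpi T₀)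
    (hsplit : ∀ X Y : C, IsSplitEpi
      (T₂ (T.obj X) Y ≫
        ((T.map (λ_ (T.obj X)).inv ≫ T₂ (𝟙_ C) X ≫ (T₀ ▷ T.obj X) ≫
          (λ_ (T.obj X)).hom) ▷ T.obj Y)))
    -- a module `(Q, q̂)`
    (Q : C) (q : ∀ X : C, T.obj (X ⊗ Q) ⟶ T.obj X ⊗ Q)
    (hqnat : ∀ {X X' : C} (f : X ⟶ X'),
      T.map (f ▷ Q) ≫ q X' = q X ≫ (T.map f ▷ Q))
    (hq : ∀ X Y : C,
      T.map ((X ◁ q Y) ≫ (α_ X (T.obj Y) Q).inv) ≫ q (X ⊗ T.obj Y) ≫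
          (T₂ X Y ▷ Q) =
        T₂ X (Y ⊗ Q) ≫ (T.obj X ◁ q Y) ≫ (α_ (T.obj X) (T.obj Y) Q).inv)
    (hqe : IsSplitEpi
      (T.map (λ_ Q).inv ≫ q (𝟙_ C) ≫ (T₀ ▷ Q) ≫ (λ_ Q).hom))
    -- a module `(P, p̂)`
    (P : C) (p : ∀ X : C, T.obj (X ⊗ P) ⟶ T.obj X ⊗ P)
    (hpnat : ∀ {X X' : C} (f : X ⟶ X'),
      T.map (f ▷ P) ≫ p X' = p X ≫ (T.map f ▷ P))
    (hp : ∀ X Y : C,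
      T.map ((X ◁ p Y) ≫ (α_ X (T.obj Y) P).inv) ≫ p (X ⊗ T.obj Y) ≫
          (T₂ X Y ▷ P) =
        T₂ X (Y ⊗ P) ≫ (T.obj X ◁ p Y) ≫ (α_ (T.obj X) (T.obj Y) P).inv)
    (hpe : IsSplitEpi
      (T.map (λ_ P).inv ≫ p (𝟙_ C) ≫ (T₀ ▷ P) ≫ (λ_ P).hom))
    -- the candidate module structure on `P ⊗ Q`
    (r : ∀ X : C, T.obj (X ⊗ (P ⊗ Q)) ⟶ T.obj X ⊗ (P ⊗ Q))
    (hr : ∀ X : C, r X =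
      T.map (α_ X P Q).inv ≫ q (X ⊗ P) ≫ (p X ▷ Q) ≫ (α_ (T.obj X) P Q).hom) :
    (∀ X Y : C,
      T.map ((X ◁ r Y) ≫ (α_ X (T.obj Y) (P ⊗ Q)).inv) ≫ r (X ⊗ T.obj Y) ≫
          (T₂ X Y ▷ (P ⊗ Q)) =
        T₂ X (Y ⊗ (P ⊗ Q)) ≫ (T.obj X ◁ r Y) ≫
          (α_ (T.obj X) (T.obj Y) (P ⊗ Q)).inv) ∧
    IsSplitEpi
      (T.map (λ_ (P ⊗ Q)).inv ≫ r (𝟙_ C) ≫ (T₀ ▷ (P ⊗ Q)) ≫ (λ_ (P ⊗ Q)).hom) := by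
  -- preprocessed forms of the hypotheses
  have hT2w : ∀ (X Y Y' : C) (g : Y ⟶ Y'),
      T.map (X ◁ T.map g) ≫ T₂ X Y' = T₂ X Y ≫ (T.obj X ◁ T.map g) := by
    intro X Y Y' g
    have h := hT₂nat (𝟙 X) g
    rw [T.map_id, id_tensorHom, id_tensorHom] at h
    exact h
  have hq' : ∀ X Y : C,
      T.map (X ◁ q Y) ≫ T.map (α_ X (T.obj Y) Q).inv ≫ q (X ⊗ T.obj Y) ≫
          (T₂ X Y ▷ Q) =
        T₂ X (Y ⊗ Q) ≫ (T.obj X ◁ q Y) ≫ (α_ (T.obj X) (T.obj Y) Q).inv := by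
    intro X Y; simpa only [Functor.map_comp, assoc] using hq X Y
  have hp' : ∀ X Y : C,
      T.map (X ◁ p Y) ≫ T.map (α_ X (T.obj Y) P).inv ≫ p (X ⊗ T.obj Y) ≫
          (T₂ X Y ▷ P) =
        T₂ X (Y ⊗ P) ≫ (T.obj X ◁ p Y) ≫ (α_ (T.obj X) (T.obj Y) P).inv := by
    intro X Y; simpa only [Functor.map_comp, assoc] using hp X Y
  constructor
  · -- the fusion equation for `r`
    intro X Y
    simp only [hr, Functor.map_comp, MonoidalCategory.whiskerLeft_comp, assoc]
    have eA : T.map (X ◁ (p Y ▷ Q)) ≫ T.map (X ◁ (α_ (T.obj Y) P Q).hom) ≫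
          T.map (α_ X (T.obj Y) (P ⊗ Q)).inv ≫ T.map (α_ (X ⊗ T.obj Y) P Q).inv =
        T.map (α_ X (T.obj (Y ⊗ P)) Q).inv ≫ T.map ((X ◁ p Y) ▷ Q) ≫
          T.map ((α_ X (T.obj Y) P).inv ▷ Q) := by
      simp only [← Functor.map_comp]
      congr 1
      monoidal
    rw [reassoc_of% eA]
    have eB : T.map ((X ◁ p Y) ▷ Q) ≫ T.map ((α_ X (T.obj Y) P).inv ▷ Q) ≫
          q ((X ⊗ T.obj Y) ⊗ P) =
        q (X ⊗ T.obj (Y ⊗ P)) ≫ (T.map (X ◁ p Y) ▷ Q) ≫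
          (T.map (α_ X (T.obj Y) P).inv ▷ Q) := by
      simpa only [Functor.map_comp, comp_whiskerRight, assoc]
        using hqnat ((X ◁ p Y) ≫ (α_ X (T.obj Y) P).inv)
    rw [reassoc_of% eB]
    have eC : (α_ (T.obj (X ⊗ T.obj Y)) P Q).hom ≫ (T₂ X Y ▷ (P ⊗ Q)) =
        ((T₂ X Y ▷ P) ▷ Q) ≫ (α_ ((T.obj X ⊗ T.obj Y : C)) P Q).hom := by
      monoidal
    rw [eC]
    have eD : (T.map (X ◁ p Y) ▷ Q) ≫ (T.map (α_ X (T.obj Y) P).inv ▷ Q) ≫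
          (p (X ⊗ T.obj Y) ▷ Q) ≫ ((T₂ X Y ▷ P) ▷ Q) =
        (T₂ X (Y ⊗ P) ▷ Q) ≫ ((T.obj X ◁ p Y) ▷ Q) ≫
          ((α_ (T.obj X) (T.obj Y) P).inv ▷ Q) := by
      simpa only [comp_whiskerRight, assoc] using congrArg (· ▷ Q) (hp' X Y)
    rw [reassoc_of% eD]
    rw [reassoc_of% (hq' X (Y ⊗ P))]
    rw [reassoc_of% (hT2w X (Y ⊗ (P ⊗ Q)) ((Y ⊗ P) ⊗ Q) (α_ Y P Q).inv)]
    monoidal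
  · -- the split epimorphism condition
    -- associativity of the `p`-action
    have hA : T.map (T.map (λ_ P).inv ≫ p (𝟙_ C) ≫ (T₀ ▷ P) ≫ (λ_ P).hom) ≫
          (T.map (λ_ P).inv ≫ p (𝟙_ C) ≫ (T₀ ▷ P) ≫ (λ_ P).hom) =
        (T.map (λ_ (T.obj P)).inv ≫ T₂ (𝟙_ C) P ≫ (T₀ ▷ T.obj P) ≫
            (λ_ (T.obj P)).hom) ≫
          (T.map (λ_ P).inv ≫ p (𝟙_ C) ≫ (T₀ ▷ P) ≫ (λ_ P).hom) := by
      have A1 : T.map (T.map (λ_ P).inv ≫ p (𝟙_ C) ≫ (T₀ ▷ P) ≫ (λ_ P).hom) ≫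
            (T.map (λ_ P).inv ≫ p (𝟙_ C) ≫ (T₀ ▷ P) ≫ (λ_ P).hom) =
          T.map (T.map (λ_ P).inv) ≫ T.map (p (𝟙_ C)) ≫ p (T.obj (𝟙_ C)) ≫
            (T.map T₀ ▷ P) ≫ (T₀ ▷ P) ≫ (λ_ P).hom := by
        have cancel : T.map (λ_ P).hom ≫ T.map (λ_ P).inv = 𝟙 _ := by
          rw [← Functor.map_comp, Iso.hom_inv_id, T.map_id]
        simp only [Functor.map_comp, assoc]
        rw [reassoc_of% cancel, reassoc_of% (hpnat T₀)]
      have A2 : (T.map (λ_ (T.obj P)).inv ≫ T₂ (𝟙_ C) P ≫ (T₀ ▷ T.obj P) ≫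
              (λ_ (T.obj P)).hom) ≫
            (T.map (λ_ P).inv ≫ p (𝟙_ C) ≫ (T₀ ▷ P) ≫ (λ_ P).hom) =
          T.map (T.map (λ_ P).inv) ≫ T.map (λ_ (T.obj (𝟙_ C ⊗ P))).inv ≫
            T₂ (𝟙_ C) (𝟙_ C ⊗ P) ≫ (T₀ ▷ T.obj (𝟙_ C ⊗ P)) ≫
            (λ_ (T.obj (𝟙_ C ⊗ P))).hom ≫ p (𝟙_ C) ≫ (T₀ ▷ P) ≫ (λ_ P).hom := by
        have r1 : (λ_ (T.obj P)).hom ≫ T.map (λ_ P).inv =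
            (𝟙_ C ◁ T.map (λ_ P).inv) ≫ (λ_ (T.obj (𝟙_ C ⊗ P))).hom := by monoidal
        have r2 : (T₀ ▷ T.obj P) ≫ (𝟙_ C ◁ T.map (λ_ P).inv) =
            (T.obj (𝟙_ C) ◁ T.map (λ_ P).inv) ≫ (T₀ ▷ T.obj (𝟙_ C ⊗ P)) :=
          (whisker_exchange T₀ (T.map (λ_ P).inv)).symm
        have r4 : T.map (λ_ (T.obj P)).inv ≫ T.map (𝟙_ C ◁ T.map (λ_ P).inv) =
            T.map (T.map (λ_ P).inv) ≫ T.map (λ_ (T.obj (𝟙_ C ⊗ P))).inv := by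
          rw [← Functor.map_comp, ← Functor.map_comp]
          congr 1
          monoidal
        simp only [assoc]
        rw [reassoc_of% r1, reassoc_of% r2,
          ← reassoc_of% (hT2w (𝟙_ C) P (𝟙_ C ⊗ P) (λ_ P).inv),
          reassoc_of% r4]
      have A3 : T.map (T.map (λ_ P).inv) ≫ T.map (p (𝟙_ C)) ≫ p (T.obj (𝟙_ C)) ≫
            (T.map T₀ ▷ P) ≫ (T₀ ▷ P) ≫ (λ_ P).hom =
          T.map (T.map (λ_ P).inv) ≫ T.map (λ_ (T.obj (𝟙_ C ⊗ P))).inv ≫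
            T₂ (𝟙_ C) (𝟙_ C ⊗ P) ≫ (T₀ ▷ T.obj (𝟙_ C ⊗ P)) ≫
            (λ_ (T.obj (𝟙_ C ⊗ P))).hom ≫ p (𝟙_ C) ≫ (T₀ ▷ P) ≫ (λ_ P).hom := by
        have m0 : p (T.obj (𝟙_ C)) = T.map ((λ_ (T.obj (𝟙_ C))).inv ▷ P) ≫
            p (𝟙_ C ⊗ T.obj (𝟙_ C)) ≫ (T.map (λ_ (T.obj (𝟙_ C))).hom ▷ P) := by
          rw [← hpnat, ← Functor.map_comp_assoc, ← comp_whiskerRight,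
            Iso.inv_hom_id, id_whiskerRight, T.map_id, id_comp]
        rw [m0]
        simp only [assoc]
        have m1 : (T.map (λ_ (T.obj (𝟙_ C))).hom ▷ P) ≫ (T.map T₀ ▷ P) =
            (T₂ (𝟙_ C) (𝟙_ C) ▷ P) ≫ ((T.obj (𝟙_ C) ◁ T₀) ▷ P) ≫
              ((ρ_ (T.obj (𝟙_ C))).hom ▷ P) := by
          have e : (λ_ (T.obj (𝟙_ C))).hom ≫ T₀ =
              (𝟙_ C ◁ T₀) ≫ (ρ_ (𝟙_ C)).hom := by
            monoidal
          have e2 : T.map (λ_ (T.obj (𝟙_ C))).hom ≫ T.map T₀ =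
              T₂ (𝟙_ C) (𝟙_ C) ≫ (T.obj (𝟙_ C) ◁ T₀) ≫ (ρ_ (T.obj (𝟙_ C))).hom := by
            rw [← Functor.map_comp, e, hTcou]
          simp only [← comp_whiskerRight]
          rw [e2]
        rw [reassoc_of% m1]
        have m3 : T.map (p (𝟙_ C)) ≫ T.map ((λ_ (T.obj (𝟙_ C))).inv ▷ P) =
            T.map (λ_ (T.obj (𝟙_ C ⊗ P))).inv ≫ T.map (𝟙_ C ◁ p (𝟙_ C)) ≫
              T.map (α_ (𝟙_ C) (T.obj (𝟙_ C)) P).inv := by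
          simp only [← Functor.map_comp]
          congr 1
          monoidal
        rw [reassoc_of% m3, reassoc_of% (hp' (𝟙_ C) (𝟙_ C))]
        have m5 : (α_ (T.obj (𝟙_ C)) (T.obj (𝟙_ C)) P).inv ≫
              ((T.obj (𝟙_ C) ◁ T₀) ▷ P) ≫ ((ρ_ (T.obj (𝟙_ C))).hom ▷ P) =
            (T.obj (𝟙_ C) ◁ (T₀ ▷ P)) ≫ (T.obj (𝟙_ C) ◁ (λ_ P).hom) := by
          monoidal
        rw [reassoc_of% m5]
        rw [← MonoidalCategory.whiskerLeft_comp_assoc,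
          ← MonoidalCategory.whiskerLeft_comp_assoc]
        simp only [assoc]
        rw [reassoc_of% (whisker_exchange T₀ (p (𝟙_ C) ≫ (T₀ ▷ P) ≫ (λ_ P).hom))]
        rw [MonoidalCategory.leftUnitor_naturality]
      rw [A1, A2, A3]
    -- the induced morphism for `r` factors through the actions of `P` and `Q`
    have B0 : T.map (λ_ (P ⊗ Q)).inv ≫ r (𝟙_ C) ≫ (T₀ ▷ (P ⊗ Q)) ≫
          (λ_ (P ⊗ Q)).hom =
        q P ≫ ((T.map (λ_ P).inv ≫ p (𝟙_ C) ≫ (T₀ ▷ P) ≫ (λ_ P).hom) ▷ Q) := by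
      rw [hr]
      simp only [assoc]
      have b1 : T.map (λ_ (P ⊗ Q)).inv ≫ T.map (α_ (𝟙_ C) P Q).inv =
          T.map ((λ_ P).inv ▷ Q) := by
        rw [← Functor.map_comp]
        congr 1
        monoidal
      rw [reassoc_of% b1, reassoc_of% (hqnat (λ_ P).inv)]
      have b2 : (α_ (T.obj (𝟙_ C)) P Q).hom ≫ (T₀ ▷ (P ⊗ Q)) ≫ (λ_ (P ⊗ Q)).hom =
          ((T₀ ▷ P) ▷ Q) ≫ ((λ_ P).hom ▷ Q) := by
        monoidal
      rw [b2]
      simp only [comp_whiskerRight, assoc]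
    -- the key compatibility
    have KEY : T.map ((T.map (λ_ P).inv ≫ p (𝟙_ C) ≫ (T₀ ▷ P) ≫ (λ_ P).hom) ⊗ₘ
            (T.map (λ_ Q).inv ≫ q (𝟙_ C) ≫ (T₀ ▷ Q) ≫ (λ_ Q).hom)) ≫
          q P ≫ ((T.map (λ_ P).inv ≫ p (𝟙_ C) ≫ (T₀ ▷ P) ≫ (λ_ P).hom) ▷ Q) =
        T₂ (T.obj P) Q ≫
          ((T.map (λ_ (T.obj P)).inv ≫ T₂ (𝟙_ C) P ≫ (T₀ ▷ T.obj P) ≫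
              (λ_ (T.obj P)).hom) ▷ T.obj Q) ≫
          ((T.map (λ_ P).inv ≫ p (𝟙_ C) ≫ (T₀ ▷ P) ≫ (λ_ P).hom) ⊗ₘ
            (T.map (λ_ Q).inv ≫ q (𝟙_ C) ≫ (T₀ ▷ Q) ≫ (λ_ Q).hom)) := by
      rw [tensorHom_def' (T.map (λ_ P).inv ≫ p (𝟙_ C) ≫ (T₀ ▷ P) ≫ (λ_ P).hom)
        (T.map (λ_ Q).inv ≫ q (𝟙_ C) ≫ (T₀ ▷ Q) ≫ (λ_ Q).hom)]
      -- rewrite the right-hand side first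
      rw [← reassoc_of% (whisker_exchange
        (T.map (λ_ (T.obj P)).inv ≫ T₂ (𝟙_ C) P ≫ (T₀ ▷ T.obj P) ≫
          (λ_ (T.obj P)).hom)
        (T.map (λ_ Q).inv ≫ q (𝟙_ C) ≫ (T₀ ▷ Q) ≫ (λ_ Q).hom))]
      -- now explode everything
      have k1 : T.map ((T.map (λ_ P).inv ≫ p (𝟙_ C) ≫ (T₀ ▷ P) ≫ (λ_ P).hom) ▷ Q)
            ≫ q P =
          q (T.obj P) ≫
            (T.map (T.map (λ_ P).inv ≫ p (𝟙_ C) ≫ (T₀ ▷ P) ≫ (λ_ P).hom) ▷ Q) :=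
        hqnat _
      simp only [Functor.map_comp, MonoidalCategory.whiskerLeft_comp,
        comp_whiskerRight, assoc] at k1 ⊢
      rw [reassoc_of% k1]
      have k3 : T.map (T.obj P ◁ (T₀ ▷ Q)) ≫ T.map (T.obj P ◁ (λ_ Q).hom) =
          T.map (α_ (T.obj P) (T.obj (𝟙_ C)) Q).inv ≫
            T.map ((T.obj P ◁ T₀) ▷ Q) ≫ T.map ((ρ_ (T.obj P)).hom ▷ Q) := by
        simp only [← Functor.map_comp]
        congr 1
        monoidal
      rw [reassoc_of% k3]
      have k4 : T.map ((T.obj P ◁ T₀) ▷ Q) ≫ T.map ((ρ_ (T.obj P)).hom ▷ Q) ≫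
            q (T.obj P) =
          q (T.obj P ⊗ T.obj (𝟙_ C)) ≫ (T.map (T.obj P ◁ T₀) ▷ Q) ≫
            (T.map (ρ_ (T.obj P)).hom ▷ Q) := by
        simpa only [Functor.map_comp, comp_whiskerRight, assoc]
          using hqnat ((T.obj P ◁ T₀) ≫ (ρ_ (T.obj P)).hom)
      rw [reassoc_of% k4]
      have k5 : (T.map (T.obj P ◁ T₀) ▷ Q) ≫ (T.map (ρ_ (T.obj P)).hom ▷ Q) =
          (T₂ (T.obj P) (𝟙_ C) ▷ Q) ≫ ((T.obj (T.obj P) ◁ T₀) ▷ Q) ≫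
            ((ρ_ (T.obj (T.obj P))).hom ▷ Q) := by
        simpa only [Functor.map_comp, comp_whiskerRight, assoc]
          using congrArg (· ▷ Q) (hTcou (T.obj P)).symm
      rw [reassoc_of% k5]
      rw [reassoc_of% (hq' (T.obj P) (𝟙_ C))]
      rw [reassoc_of% (hT2w (T.obj P) Q (𝟙_ C ⊗ Q) (λ_ Q).inv)]
      have k8 : (α_ (T.obj (T.obj P)) (T.obj (𝟙_ C)) Q).inv ≫
            ((T.obj (T.obj P) ◁ T₀) ▷ Q) ≫ ((ρ_ (T.obj (T.obj P))).hom ▷ Q) =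
          (T.obj (T.obj P) ◁ (T₀ ▷ Q)) ≫ (T.obj (T.obj P) ◁ (λ_ Q).hom) := by
        monoidal
      rw [reassoc_of% k8]
      have k9 : (T.map (T.map (λ_ P).inv) ▷ Q) ≫ (T.map (p (𝟙_ C)) ▷ Q) ≫
            (T.map (T₀ ▷ P) ▷ Q) ≫ (T.map (λ_ P).hom ▷ Q) ≫
            (T.map (λ_ P).inv ▷ Q) ≫ (p (𝟙_ C) ▷ Q) ≫ ((T₀ ▷ P) ▷ Q) ≫
            ((λ_ P).hom ▷ Q) =
          (T.map (λ_ (T.obj P)).inv ▷ Q) ≫ (T₂ (𝟙_ C) P ▷ Q) ≫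
            ((T₀ ▷ T.obj P) ▷ Q) ≫ ((λ_ (T.obj P)).hom ▷ Q) ≫
            (T.map (λ_ P).inv ▷ Q) ≫ (p (𝟙_ C) ▷ Q) ≫ ((T₀ ▷ P) ▷ Q) ≫
            ((λ_ P).hom ▷ Q) := by
        simpa only [Functor.map_comp, comp_whiskerRight, assoc]
          using congrArg (· ▷ Q) hA
      rw [k9]
    -- assemble the section
    rw [B0]
    obtain ⟨⟨⟨sP, hsP⟩⟩⟩ := hpe
    obtain ⟨⟨⟨sQ, hsQ⟩⟩⟩ := hqe
    obtain ⟨⟨⟨sS, hsS⟩⟩⟩ := hsplit P Q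
    refine ⟨⟨⟨(sP ⊗ₘ sQ) ≫ sS ≫
      T.map ((T.map (λ_ P).inv ≫ p (𝟙_ C) ≫ (T₀ ▷ P) ≫ (λ_ P).hom) ⊗ₘ
        (T.map (λ_ Q).inv ≫ q (𝟙_ C) ≫ (T₀ ▷ Q) ≫ (λ_ Q).hom)), ?_⟩⟩⟩
    simp only [assoc]
    rw [KEY, reassoc_of% hsS, tensorHom_comp_tensorHom, hsP, hsQ, id_tensorHom_id]
end

section
/- Let A be an object of a braided monoidal category C and let t₁, t₂ : A ⊗ A ⟶ A ⊗ A and e : A ⟶ I satisfy (t₂ ⊗ 1_A) ≫ (1_A ⊗ t₁) = (1_A ⊗ t₁) ≫ (t₂ ⊗ 1_A) and t₁ ≫ (e ⊗ 1_A) = t₂ ≫ (1_A ⊗ e), and assume the common composite m := t₁ ≫ (e ⊗ 1_A) ≫ λ_A is non-degenerate. Then the following are equivalent: (i) t₁ ≫ (1_A ⊗ e) = 1_A ⊗ e; (ii) t₂ ≫ (e ⊗ 1_A) = e ⊗ 1_A; (iii) m ≫ e = (e ⊗ e) ≫ λ_I. -/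
open CategoryTheory Category MonoidalCategory

universe v u

variable {C : Type u} [Category.{v} C] [MonoidalCategory C] [BraidedCategory C]

/-- A morphism `m : A ⊗ A ⟶ A` is non-degenerate if tensoring hom-sets with it on
either side is injective. -/
def NonDeg (A : C) (m : A ⊗ A ⟶ A) : Prop :=
  (∀ (X Y : C) (f g : X ⟶ Y ⊗ A),
      (f ▷ A) ≫ (α_ Y A A).hom ≫ (Y ◁ m) = (g ▷ A) ≫ (α_ Y A A).hom ≫ (Y ◁ m) →
      f = g) ∧
  (∀ (X Y : C) (f g : X ⟶ A ⊗ Y),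
      (A ◁ f) ≫ (α_ A A Y).inv ≫ (m ▷ Y) = (A ◁ g) ≫ (α_ A A Y).inv ≫ (m ▷ Y) →
      f = g)

/-! Write `ε := (e ⊗ e) ≫ λ_𝟙`. Since `ε = (1 ⊗ e) ≫ ρ ≫ e = (e ⊗ 1) ≫ λ ≫ e`, we have
`m ≫ e = t₁ ≫ ε = t₂ ≫ ε`, so (iii) says that `t₁`, equivalently `t₂`, fixes `ε`; this follows
at once from (i) or (ii). Conversely, to get (i) compare `t₁ ≫ (1 ⊗ e)` with `1 ⊗ e` after
multiplying by `m` on the left: with `m = t₂ ≫ (1 ⊗ e) ≫ ρ`, the compatibility of `t₁` and `t₂`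
moves `t₁` next to `ε`, where it disappears, and non-degeneracy of `m` cancels the
multiplication. (ii) is the mirror image, using `m = t₁ ≫ (e ⊗ 1) ≫ λ`. -/

section
omit [BraidedCategory C]

variable {A : C} (e : A ⟶ 𝟙_ C)

lemma whiskerRight_leftUnitor_comp_self :
    (e ▷ A) ≫ (λ_ A).hom ≫ e = (e ⊗ₘ e) ≫ (λ_ (𝟙_ C)).hom := by
  rw [tensorHom_def', assoc, whisker_exchange_assoc, leftUnitor_naturality]

lemma whiskerLeft_rightUnitor_comp_self :
    (A ◁ e) ≫ (ρ_ A).hom ≫ e = (e ⊗ₘ e) ≫ (λ_ (𝟙_ C)).hom := by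
  rw [MonoidalCategory.tensorHom_def, assoc, ← whisker_exchange_assoc, unitors_equal,
    rightUnitor_naturality]

lemma whiskerRight_rightUnitor_whiskerLeft :
    (((A ◁ e) ≫ (ρ_ A).hom) ▷ A) ≫ (A ◁ e) =
      (α_ A A A).hom ≫ (A ◁ ((e ⊗ₘ e) ≫ (λ_ (𝟙_ C)).hom)) := by
  rw [← whiskerRight_leftUnitor_comp_self]
  monoidal

lemma whiskerLeft_leftUnitor_whiskerRight :
    (A ◁ ((e ▷ A) ≫ (λ_ A).hom)) ≫ (e ▷ A) =
      (α_ A A A).inv ≫ (((e ⊗ₘ e) ≫ (λ_ (𝟙_ C)).hom) ▷ A) := by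
  rw [← whiskerLeft_rightUnitor_comp_self]
  monoidal

variable {t₁ t₂ : A ⊗ A ⟶ A ⊗ A}

lemma comp_counit_eq_of_comp_whiskerLeft_eq (h : t₁ ≫ (A ◁ e) = A ◁ e) :
    t₁ ≫ (e ⊗ₘ e) ≫ (λ_ (𝟙_ C)).hom = (e ⊗ₘ e) ≫ (λ_ (𝟙_ C)).hom := by
  rw [← whiskerLeft_rightUnitor_comp_self, reassoc_of% h]

lemma comp_counit_eq_of_comp_whiskerRight_eq (h : t₂ ≫ (e ▷ A) = e ▷ A) :
    t₂ ≫ (e ⊗ₘ e) ≫ (λ_ (𝟙_ C)).hom = (e ⊗ₘ e) ≫ (λ_ (𝟙_ C)).hom := by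
  rw [← whiskerRight_leftUnitor_comp_self, reassoc_of% h]

lemma comp_whiskerLeft_eq_of_comp_counit_eq (hcompat : CompatEq A t₁ t₂)
    (hnd : NonDeg A (t₂ ≫ (A ◁ e) ≫ (ρ_ A).hom))
    (h : t₁ ≫ (e ⊗ₘ e) ≫ (λ_ (𝟙_ C)).hom = (e ⊗ₘ e) ≫ (λ_ (𝟙_ C)).hom) :
    t₁ ≫ (A ◁ e) = A ◁ e := by
  set m := t₂ ≫ (A ◁ e) ≫ (ρ_ A).hom
  have hm : (m ▷ A) ≫ (A ◁ e) =
      (t₂ ▷ A) ≫ (α_ A A A).hom ≫ (A ◁ ((e ⊗ₘ e) ≫ (λ_ (𝟙_ C)).hom)) := by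
    rw [← whiskerRight_rightUnitor_whiskerLeft, ← comp_whiskerRight_assoc]
  have hswap : (A ◁ t₁) ≫ (α_ A A A).inv ≫ (t₂ ▷ A) ≫ (α_ A A A).hom =
      (α_ A A A).inv ≫ (t₂ ▷ A) ≫ (α_ A A A).hom ≫ (A ◁ t₁) := by
    rw [← cancel_epi (α_ A A A).hom, ← cancel_mono (α_ A A A).inv]
    simpa using hcompat.symm
  apply hnd.2 (A ⊗ A) (𝟙_ C)
  calc (A ◁ (t₁ ≫ (A ◁ e))) ≫ (α_ A A (𝟙_ C)).inv ≫ (m ▷ 𝟙_ C)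
      = (A ◁ t₁) ≫ (α_ A A A).inv ≫ (m ▷ A) ≫ (A ◁ e) := by
        rw [whiskerLeft_comp, assoc, associator_inv_naturality_right_assoc, whisker_exchange]
    _ = (α_ A A A).inv ≫ (t₂ ▷ A) ≫ (α_ A A A).hom ≫
          (A ◁ (t₁ ≫ (e ⊗ₘ e) ≫ (λ_ (𝟙_ C)).hom)) := by
        rw [hm, reassoc_of% hswap]
        simp only [whiskerLeft_comp]
    _ = (α_ A A A).inv ≫ (m ▷ A) ≫ (A ◁ e) := by rw [h, hm]
    _ = (A ◁ (A ◁ e)) ≫ (α_ A A (𝟙_ C)).inv ≫ (m ▷ 𝟙_ C) := by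
        rw [associator_inv_naturality_right_assoc, whisker_exchange]

lemma comp_whiskerRight_eq_of_comp_counit_eq (hcompat : CompatEq A t₁ t₂)
    (hnd : NonDeg A (t₁ ≫ (e ▷ A) ≫ (λ_ A).hom))
    (h : t₂ ≫ (e ⊗ₘ e) ≫ (λ_ (𝟙_ C)).hom = (e ⊗ₘ e) ≫ (λ_ (𝟙_ C)).hom) :
    t₂ ≫ (e ▷ A) = e ▷ A := by
  set m := t₁ ≫ (e ▷ A) ≫ (λ_ A).hom
  have hm : (A ◁ m) ≫ (e ▷ A) =
      (A ◁ t₁) ≫ (α_ A A A).inv ≫ (((e ⊗ₘ e) ≫ (λ_ (𝟙_ C)).hom) ▷ A) := by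
    rw [← whiskerLeft_leftUnitor_whiskerRight, ← whiskerLeft_comp_assoc]
  apply hnd.1 (A ⊗ A) (𝟙_ C)
  calc ((t₂ ≫ (e ▷ A)) ▷ A) ≫ (α_ (𝟙_ C) A A).hom ≫ (𝟙_ C ◁ m)
      = (t₂ ▷ A) ≫ (α_ A A A).hom ≫ (A ◁ m) ≫ (e ▷ A) := by
        rw [comp_whiskerRight, assoc, associator_naturality_left_assoc, ← whisker_exchange]
    _ = (α_ A A A).hom ≫ (A ◁ t₁) ≫ (α_ A A A).inv ≫
          ((t₂ ≫ (e ⊗ₘ e) ≫ (λ_ (𝟙_ C)).hom) ▷ A) := by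
        rw [hm, reassoc_of% hcompat]
        simp only [comp_whiskerRight]
    _ = (α_ A A A).hom ≫ (A ◁ m) ≫ (e ▷ A) := by rw [h, hm]
    _ = ((e ▷ A) ▷ A) ≫ (α_ (𝟙_ C) A A).hom ≫ (𝟙_ C ◁ m) := by
        rw [associator_naturality_left_assoc, ← whisker_exchange]

end

/-- If `(t₂ ⊗ 1) ≫ (1 ⊗ t₁) = (1 ⊗ t₁) ≫ (t₂ ⊗ 1)`, `t₁ ≫ (e ⊗ 1) = t₂ ≫ (1 ⊗ e)`
and the common composite `m` is non-degenerate, then the following are equivalent: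
(i) `t₁ ≫ (1 ⊗ e) = 1 ⊗ e`; (ii) `t₂ ≫ (e ⊗ 1) = e ⊗ 1`;
(iii) `m ≫ e = (e ⊗ e) ≫ λ_I`. -/
theorem counital_tfae (A : C) (t₁ t₂ : A ⊗ A ⟶ A ⊗ A) (e : A ⟶ 𝟙_ C)
    (hcompat : CompatEq A t₁ t₂)
    (hcounits : t₁ ≫ (e ▷ A) ≫ (λ_ A).hom = t₂ ≫ (A ◁ e) ≫ (ρ_ A).hom)
    (hnd : NonDeg A (t₁ ≫ (e ▷ A) ≫ (λ_ A).hom)) :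
    ((t₁ ≫ (A ◁ e) = A ◁ e) ↔ (t₂ ≫ (e ▷ A) = e ▷ A)) ∧
    ((t₂ ≫ (e ▷ A) = e ▷ A) ↔
      ((t₁ ≫ (e ▷ A) ≫ (λ_ A).hom) ≫ e = (e ⊗ₘ e) ≫ (λ_ (𝟙_ C)).hom)) := by
  have hm₁ : (t₁ ≫ (e ▷ A) ≫ (λ_ A).hom) ≫ e = t₁ ≫ (e ⊗ₘ e) ≫ (λ_ (𝟙_ C)).hom := by
    simp only [assoc, whiskerRight_leftUnitor_comp_self]
  have hm₂ : (t₁ ≫ (e ▷ A) ≫ (λ_ A).hom) ≫ e = t₂ ≫ (e ⊗ₘ e) ≫ (λ_ (𝟙_ C)).hom := by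
    simp only [hcounits, assoc, whiskerLeft_rightUnitor_comp_self]
  have h₁ : (t₁ ≫ (A ◁ e) = A ◁ e) ↔
      ((t₁ ≫ (e ▷ A) ≫ (λ_ A).hom) ≫ e = (e ⊗ₘ e) ≫ (λ_ (𝟙_ C)).hom) :=
    ⟨fun h => hm₁.trans (comp_counit_eq_of_comp_whiskerLeft_eq e h),
      fun h => comp_whiskerLeft_eq_of_comp_counit_eq e hcompat (hcounits ▸ hnd) (hm₁ ▸ h)⟩
  have h₂ : (t₂ ≫ (e ▷ A) = e ▷ A) ↔
      ((t₁ ≫ (e ▷ A) ≫ (λ_ A).hom) ≫ e = (e ⊗ₘ e) ≫ (λ_ (𝟙_ C)).hom) :=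
    ⟨fun h => hm₂.trans (comp_counit_eq_of_comp_whiskerRight_eq e h),
      fun h => comp_whiskerRight_eq_of_comp_counit_eq e hcompat hnd (hm₂ ▸ h)⟩
  exact ⟨h₁.trans h₂.symm, h₂⟩
end

section
/- Let A be an object of a braided monoidal category C with braiding b, and let t₁, t₂, t₃, t₄ : A ⊗ A ⟶ A ⊗ A and e : A ⟶ I be morphisms such that (t₁, t₂, e) is a multiplier bimonoid in C and (t₃, t₄, e) is a multiplier bimonoid in C̄ (the same category with inverse braiding b⁻¹). Then the following are equivalent: (1) (t₁, t₂, t₃, t₄, e) is a regular multiplier bimonoid in C; (2) (t₂, t₁, t₄, t₃, e) is a regular multiplier bimonoid in the reverse monoidal category C^rev; (3) (t₃, t₄, t₁, t₂, e) is a regular multiplier bimonoid in C̄; (4) (t₄, t₃, t₂, t₁, e) is a regular multiplier bimonoid in C̄^rev. (Each condition is a finite list of equations among composites of the tᵢ, e, b and b⁻¹ in C, obtained from the axioms (A), (B), (A^rev), (B^rev), (C) below by the corresponding reversal of the tensor product and/or replacement of b by b⁻¹.) -/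
open CategoryTheory Category MonoidalCategory

universe v u

variable {C : Type u} [Category.{v} C] [MonoidalCategory C] [BraidedCategory C]

/-- The fusion equation for `t : A ⊗ A ⟶ A ⊗ A`, relative to a braiding
isomorphism `bb` on `A ⊗ A` (domain `A ⊗ (A ⊗ A)`).  With `bb = β_ A A` this is
the fusion equation in `C`; with `bb = (β_ A A).symm` it is the fusion equation in
`C̄`, the same category with the inverse braiding. -/
def FusionEqB (A : C) (bb : A ⊗ A ≅ A ⊗ A) (t : A ⊗ A ⟶ A ⊗ A) : Prop :=
  (A ◁ t) ≫ (α_ A A A).inv ≫ (bb.hom ▷ A) ≫ (α_ A A A).hom ≫ (A ◁ t) ≫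
      (α_ A A A).inv ≫ (bb.inv ▷ A) ≫ (t ▷ A) ≫ (α_ A A A).hom =
    (α_ A A A).inv ≫ (t ▷ A) ≫ (α_ A A A).hom ≫ (A ◁ t)

/-- The fusion equation in the reverse monoidal category, relative to a braiding
isomorphism `bb` on `A ⊗ A` (domain `(A ⊗ A) ⊗ A`). -/
def RevFusionEqB (A : C) (bb : A ⊗ A ≅ A ⊗ A) (t : A ⊗ A ⟶ A ⊗ A) : Prop :=
  (t ▷ A) ≫ (α_ A A A).hom ≫ (A ◁ bb.hom) ≫ (α_ A A A).inv ≫ (t ▷ A) ≫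
      (α_ A A A).hom ≫ (A ◁ bb.inv) ≫ (A ◁ t) ≫ (α_ A A A).inv =
    (α_ A A A).hom ≫ (A ◁ t) ≫ (α_ A A A).inv ≫ (t ▷ A)

/-- `(t₁, t₂, e)` is a multiplier bimonoid on `A`, relative to the braiding
isomorphism `bb` on `A ⊗ A`.  With `bb = β_ A A` this is the notion of multiplier
bimonoid in `C`; with `bb = (β_ A A).symm` it is the notion in `C̄`.  (Moreover,
`(t₂, t₁, e)` is a multiplier bimonoid in `C^rev` precisely when
`MBM A bb t₁ t₂ e`.) -/
def MBM (A : C) (bb : A ⊗ A ≅ A ⊗ A) (t₁ t₂ : A ⊗ A ⟶ A ⊗ A) (e : A ⟶ 𝟙_ C) :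
    Prop :=
  FusionEqB A bb t₁ ∧ (t₁ ≫ (A ◁ e) = A ◁ e) ∧
  RevFusionEqB A bb t₂ ∧ (t₂ ≫ (e ▷ A) = e ▷ A) ∧
  CompatEq A t₁ t₂ ∧
  (t₁ ≫ (e ▷ A) ≫ (λ_ A).hom = t₂ ≫ (A ◁ e) ≫ (ρ_ A).hom)

/-- Axiom (A): `(b ⊗ 1) ≫ (t₃ ⊗ 1) ≫ (1 ⊗ m) = (1 ⊗ t₁) ≫ (b ⊗ 1) ≫ (1 ⊗ m)`. -/
def AxA (A : C) (b : A ⊗ A ⟶ A ⊗ A) (t₁ t₃ : A ⊗ A ⟶ A ⊗ A) (m : A ⊗ A ⟶ A) :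
    Prop :=
  (b ▷ A) ≫ (t₃ ▷ A) ≫ (α_ A A A).hom ≫ (A ◁ m) =
    (α_ A A A).hom ≫ (A ◁ t₁) ≫ (α_ A A A).inv ≫ (b ▷ A) ≫ (α_ A A A).hom ≫
      (A ◁ m)

/-- Axiom (B): `(1 ⊗ t₁) ≫ (t₄ ⊗ 1) = (t₄ ⊗ 1) ≫ (1 ⊗ t₁)`. -/
def AxB (A : C) (t₁ t₄ : A ⊗ A ⟶ A ⊗ A) : Prop :=
  (α_ A A A).hom ≫ (A ◁ t₁) ≫ (α_ A A A).inv ≫ (t₄ ▷ A) =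
    (t₄ ▷ A) ≫ (α_ A A A).hom ≫ (A ◁ t₁) ≫ (α_ A A A).inv

/-- Axiom (A^rev): `(1 ⊗ b) ≫ (1 ⊗ t₄) ≫ (m ⊗ 1) = (t₂ ⊗ 1) ≫ (1 ⊗ b) ≫ (m ⊗ 1)`. -/
def AxArev (A : C) (b : A ⊗ A ⟶ A ⊗ A) (t₂ t₄ : A ⊗ A ⟶ A ⊗ A) (m : A ⊗ A ⟶ A) :
    Prop :=
  (α_ A A A).hom ≫ (A ◁ b) ≫ (A ◁ t₄) ≫ (α_ A A A).inv ≫ (m ▷ A) =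
    (t₂ ▷ A) ≫ (α_ A A A).hom ≫ (A ◁ b) ≫ (α_ A A A).inv ≫ (m ▷ A)

/-- Axiom (B^rev): `(t₂ ⊗ 1) ≫ (1 ⊗ t₃) = (1 ⊗ t₃) ≫ (t₂ ⊗ 1)`. -/
def AxBrev (A : C) (t₂ t₃ : A ⊗ A ⟶ A ⊗ A) : Prop :=
  (t₂ ▷ A) ≫ (α_ A A A).hom ≫ (A ◁ t₃) ≫ (α_ A A A).inv =
    (α_ A A A).hom ≫ (A ◁ t₃) ≫ (α_ A A A).inv ≫ (t₂ ▷ A)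

/-- Axiom (C): `b⁻¹ ≫ t₁ ≫ (e ⊗ 1) = t₃ ≫ (e ⊗ 1)`. -/
def AxC (A : C) (binv : A ⊗ A ⟶ A ⊗ A) (t₁ t₃ : A ⊗ A ⟶ A ⊗ A) (e : A ⟶ 𝟙_ C) :
    Prop :=
  binv ≫ t₁ ≫ (e ▷ A) = t₃ ≫ (e ▷ A)

/-- The reverse-monoidal form of axiom (C): `b⁻¹ ≫ t₂ ≫ (1 ⊗ e) = t₄ ≫ (1 ⊗ e)`. -/
def AxCrev (A : C) (binv : A ⊗ A ⟶ A ⊗ A) (t₂ t₄ : A ⊗ A ⟶ A ⊗ A) (e : A ⟶ 𝟙_ C) :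
    Prop :=
  binv ≫ t₂ ≫ (A ◁ e) = t₄ ≫ (A ◁ e)

/-- `(t₁, t₂, t₃, t₄, e)` is a regular multiplier bimonoid, relative to the
braiding isomorphism `bb`.  With `bb = β_ A A` this is the notion of regular
multiplier bimonoid in `C`; with `bb = (β_ A A).symm` it is the notion in `C̄`. -/
def RegMBM (A : C) (bb : A ⊗ A ≅ A ⊗ A) (t₁ t₂ t₃ t₄ : A ⊗ A ⟶ A ⊗ A)
    (e : A ⟶ 𝟙_ C) : Prop :=
  MBM A bb t₁ t₂ e ∧ MBM A bb.symm t₃ t₄ e ∧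
  AxA A bb.hom t₁ t₃ (t₁ ≫ (e ▷ A) ≫ (λ_ A).hom) ∧
  AxB A t₁ t₄ ∧
  AxArev A bb.hom t₂ t₄ (t₁ ≫ (e ▷ A) ≫ (λ_ A).hom) ∧
  AxBrev A t₂ t₃ ∧
  AxC A bb.inv t₁ t₃ e

/-- `(t₂, t₁, t₄, t₃, e)` is a regular multiplier bimonoid in the reverse monoidal
category (with braiding corresponding to `bb`), expressed by equations in `C`:
each axiom of `RegMBM` is transported along the reversal of the monoidal
product. -/
def RegMBMrev (A : C) (bb : A ⊗ A ≅ A ⊗ A) (t₁ t₂ t₃ t₄ : A ⊗ A ⟶ A ⊗ A)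
    (e : A ⟶ 𝟙_ C) : Prop :=
  MBM A bb t₁ t₂ e ∧ MBM A bb.symm t₃ t₄ e ∧
  AxA A bb.hom t₁ t₃ (t₂ ≫ (A ◁ e) ≫ (ρ_ A).hom) ∧
  AxB A t₁ t₄ ∧
  AxArev A bb.hom t₂ t₄ (t₂ ≫ (A ◁ e) ≫ (ρ_ A).hom) ∧
  AxBrev A t₂ t₃ ∧
  AxCrev A bb.inv t₂ t₄ e

/-! Passing to `C^rev` only replaces the multiplication `m = t₁ ≫ (e ⊗ 1)` by the equal
composite `t₂ ≫ (1 ⊗ e)`, and axiom (C) by its mirror image, which is equivalent to it once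
`m` and its `C̄`-analogue are computed both ways. Passing to `C̄` exchanges (B) and (B^rev)
and inverts (C); by (C) the multiplication of `C̄` is `b⁻¹ ≫ m`, and then (A) and (A^rev) of
`C̄` follow from those of `C` by sliding `tᵢ` through the inverse braidings of `A` with
`A ⊗ A`. The converse is the same argument in `C̄`, whose reversed braiding is that of `C`. -/

section Monoidal

variable {M : Type*} [Category M] [MonoidalCategory M] {A : M} {e : A ⟶ 𝟙_ M}

lemma AxC.symm {bb : A ⊗ A ≅ A ⊗ A} {t₁ t₃ : A ⊗ A ⟶ A ⊗ A}
    (h : AxC A bb.inv t₁ t₃ e) : AxC A bb.hom t₃ t₁ e := by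
  rw [AxC, ← h, Iso.hom_inv_id_assoc]

lemma axC_iff_axCrev {binv t₁ t₂ t₃ t₄ : A ⊗ A ⟶ A ⊗ A}
    (h₁₂ : t₁ ≫ e ▷ A ≫ (λ_ A).hom = t₂ ≫ A ◁ e ≫ (ρ_ A).hom)
    (h₃₄ : t₃ ≫ e ▷ A ≫ (λ_ A).hom = t₄ ≫ A ◁ e ≫ (ρ_ A).hom) :
    AxC A binv t₁ t₃ e ↔ AxCrev A binv t₂ t₄ e := by
  rw [AxC, AxCrev, ← cancel_mono (λ_ A).hom, ← cancel_mono (ρ_ A).hom]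
  simp only [assoc, h₁₂, h₃₄]

lemma regMBM_iff_regMBMrev {bb : A ⊗ A ≅ A ⊗ A} {t₁ t₂ t₃ t₄ : A ⊗ A ⟶ A ⊗ A} :
    RegMBM A bb t₁ t₂ t₃ t₄ e ↔ RegMBMrev A bb t₁ t₂ t₃ t₄ e := by
  refine and_congr_right fun h₁₂ => and_congr_right fun h₃₄ => ?_
  obtain ⟨-, -, -, -, -, hm₁₂⟩ := h₁₂
  obtain ⟨-, -, -, -, -, hm₃₄⟩ := h₃₄
  rw [hm₁₂, axC_iff_axCrev hm₁₂ hm₃₄]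

end Monoidal

section Braided

open BraidedCategory

variable {A : C} (f : A ⊗ A ⟶ A ⊗ A)

lemma whiskerRight_braiding_tensor_right_inv_comm :
    f ▷ A ≫ (α_ A A A).hom ≫ A ◁ (β_ A A).inv ≫ (α_ A A A).inv ≫ (β_ A A).inv ▷ A =
      (α_ A A A).hom ≫ A ◁ (β_ A A).inv ≫ (α_ A A A).inv ≫ (β_ A A).inv ▷ A ≫
        (α_ A A A).hom ≫ A ◁ f ≫ (α_ A A A).inv := by
  simpa using braiding_inv_naturality_left f A =≫ (α_ A A A).inv

lemma whiskerLeft_braiding_tensor_left_inv_comm :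
    A ◁ f ≫ (α_ A A A).inv ≫ (β_ A A).inv ▷ A ≫ (α_ A A A).hom ≫ A ◁ (β_ A A).inv =
      (α_ A A A).inv ≫ (β_ A A).inv ▷ A ≫ (α_ A A A).hom ≫ A ◁ (β_ A A).inv ≫
        (α_ A A A).inv ≫ f ▷ A ≫ (α_ A A A).hom := by
  simpa using braiding_inv_naturality_right A f =≫ (α_ A A A).hom

lemma whiskerRight_whiskerLeft_braiding_inv_comm :
    f ▷ A ≫ (α_ A A A).hom ≫ A ◁ (β_ A A).inv =
      (α_ A A A).hom ≫ A ◁ (β_ A A).inv ≫ (α_ A A A).inv ≫ (β_ A A).inv ▷ A ≫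
        (α_ A A A).hom ≫ A ◁ f ≫ (α_ A A A).inv ≫ (β_ A A).hom ▷ A ≫ (α_ A A A).hom := by
  simpa using
    whiskerRight_braiding_tensor_right_inv_comm f =≫ ((β_ A A).hom ▷ A ≫ (α_ A A A).hom)

lemma whiskerLeft_whiskerRight_braiding_inv_comm :
    A ◁ f ≫ (α_ A A A).inv ≫ (β_ A A).inv ▷ A =
      (α_ A A A).inv ≫ (β_ A A).inv ▷ A ≫ (α_ A A A).hom ≫ A ◁ (β_ A A).inv ≫
        (α_ A A A).inv ≫ f ▷ A ≫ (α_ A A A).hom ≫ A ◁ (β_ A A).hom ≫ (α_ A A A).inv := by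
  simpa using
    whiskerLeft_braiding_tensor_left_inv_comm f =≫ (A ◁ (β_ A A).hom ≫ (α_ A A A).inv)

variable {t₁ t₂ t₃ t₄ : A ⊗ A ⟶ A ⊗ A} {m : A ⊗ A ⟶ A} {e : A ⟶ 𝟙_ C}

lemma AxA.braiding_inv (h : AxA A (β_ A A).hom t₁ t₃ m) :
    AxA A (β_ A A).inv t₃ t₁ ((β_ A A).inv ≫ m) := by
  unfold AxA at *
  rw [whiskerLeft_comp, reassoc_of% (whiskerRight_whiskerLeft_braiding_inv_comm t₁), ← h,
    reassoc_of% (whiskerLeft_braiding_tensor_left_inv_comm t₃)]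
  simp only [Iso.hom_inv_id_assoc, inv_hom_whiskerRight_assoc]

lemma AxArev.braiding_inv (h : AxArev A (β_ A A).hom t₂ t₄ m) :
    AxArev A (β_ A A).inv t₄ t₂ ((β_ A A).inv ≫ m) := by
  unfold AxArev at *
  have h' := (A ◁ (β_ A A).inv ≫ (α_ A A A).inv) ≫= h
  simp only [assoc, Iso.inv_hom_id_assoc, whiskerLeft_inv_hom_assoc] at h'
  rw [comp_whiskerRight, reassoc_of% (whiskerRight_braiding_tensor_right_inv_comm t₄), h',
    reassoc_of% (whiskerLeft_whiskerRight_braiding_inv_comm t₂)]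

lemma RegMBM.braiding_symm (h : RegMBM A (β_ A A) t₁ t₂ t₃ t₄ e) :
    RegMBM A (β_ A A).symm t₃ t₄ t₁ t₂ e := by
  obtain ⟨h₁₂, h₃₄, hA, hB, hArev, hBrev, hC⟩ := h
  have hm : t₃ ≫ e ▷ A ≫ (λ_ A).hom = (β_ A A).inv ≫ t₁ ≫ e ▷ A ≫ (λ_ A).hom := by
    unfold AxC at hC
    rw [reassoc_of% hC]
  refine ⟨h₃₄, h₁₂, ?_, hBrev.symm, ?_, hB.symm, hC.symm⟩
  · rw [Iso.symm_hom, hm]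
    exact hA.braiding_inv
  · rw [Iso.symm_hom, hm]
    exact hArev.braiding_inv

end Braided

theorem regMBM_tfae_general (A : C) (t₁ t₂ t₃ t₄ : A ⊗ A ⟶ A ⊗ A) (e : A ⟶ 𝟙_ C) :
    List.TFAE
      [RegMBM A (β_ A A) t₁ t₂ t₃ t₄ e,
       RegMBMrev A (β_ A A) t₁ t₂ t₃ t₄ e,
       RegMBM A (β_ A A).symm t₃ t₄ t₁ t₂ e,
       RegMBMrev A (β_ A A).symm t₃ t₄ t₁ t₂ e] := by
  tfae_have 1 ↔ 2 := regMBM_iff_regMBMrev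
  tfae_have 3 ↔ 4 := regMBM_iff_regMBMrev
  tfae_have 1 → 3 := RegMBM.braiding_symm
  tfae_have 3 → 1 := letI := reverseBraiding C; RegMBM.braiding_symm
  tfae_finish

/-- Given a multiplier bimonoid `(t₁, t₂, e)` in `C` and a multiplier bimonoid
`(t₃, t₄, e)` in `C̄`, the following are equivalent:
(1) `(t₁, t₂, t₃, t₄, e)` is a regular multiplier bimonoid in `C`;
(2) `(t₂, t₁, t₄, t₃, e)` is a regular multiplier bimonoid in `C^rev`;
(3) `(t₃, t₄, t₁, t₂, e)` is a regular multiplier bimonoid in `C̄`;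
(4) `(t₄, t₃, t₂, t₁, e)` is a regular multiplier bimonoid in `C̄^rev`. -/
theorem regMBM_tfae (A : C) (t₁ t₂ t₃ t₄ : A ⊗ A ⟶ A ⊗ A) (e : A ⟶ 𝟙_ C)
    (h₁₂ : MBM A (β_ A A) t₁ t₂ e) (h₃₄ : MBM A (β_ A A).symm t₃ t₄ e) :
    List.TFAE
      [RegMBM A (β_ A A) t₁ t₂ t₃ t₄ e,
       RegMBMrev A (β_ A A) t₁ t₂ t₃ t₄ e,
       RegMBM A (β_ A A).symm t₃ t₄ t₁ t₂ e,
       RegMBMrev A (β_ A A).symm t₃ t₄ t₁ t₂ e] :=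
  regMBM_tfae_general A t₁ t₂ t₃ t₄ e
end

section
/- Let k be a field, A a k-vector space, and t₁, t₂ : A ⊗ A → A ⊗ A, e : A → k linear maps (tensor products over k; τ denotes the flip v ⊗ w ↦ w ⊗ v; composition is right-to-left) such that: t₁ satisfies the fusion equation (t₁ ⊗ 1) ∘ (τ ⊗ 1) ∘ (1 ⊗ t₁) ∘ (τ ⊗ 1) ∘ (1 ⊗ t₁) = (1 ⊗ t₁) ∘ (t₁ ⊗ 1) and (1 ⊗ e) ∘ t₁ = 1 ⊗ e; t₂ satisfies (1 ⊗ t₂) ∘ (1 ⊗ τ) ∘ (t₂ ⊗ 1) ∘ (1 ⊗ τ) ∘ (t₂ ⊗ 1) = (t₂ ⊗ 1) ∘ (1 ⊗ t₂) and (e ⊗ 1) ∘ t₂ = e ⊗ 1; (t₂ ⊗ 1) ∘ (1 ⊗ t₁) = (1 ⊗ t₁) ∘ (t₂ ⊗ 1); and (e ⊗ 1) ∘ t₁ = (1 ⊗ e) ∘ t₂ =: m : A ⊗ A → A. Assume further that m, (m ⊗ 1) ∘ (τ ⊗ 1) ∘ (1 ⊗ t₁) and (1 ⊗ m) ∘ (1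 ⊗ τ) ∘ (t₂ ⊗ 1) are surjective, and that m is non-degenerate (both maps A → Hom_k(A, A), a ↦ m(a ⊗ −) and a ↦ m(− ⊗ a), are injective). Then the multiplier bialgebra axioms hold; in particular: (c) e ∘ m = (multiplication of k) ∘ (e ⊗ e), and (a) t₁ ∘ (m ⊗ 1) = (m ⊗ 1) ∘ (τ ⊗ 1) ∘ (1 ⊗ t₁) ∘ (τ ⊗ 1) ∘ (1 ⊗ t₁), equivalently t₂ ∘ (1 ⊗ m) = (1 ⊗ m) ∘ (1 ⊗ τ) ∘ (t₂ ⊗ 1) ∘ (1 ⊗ τ) ∘ (t₂ ⊗ 1). -/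
open TensorProduct LinearMap

variable {k : Type*} [Field k] {A : Type*} [AddCommGroup A] [Module k A]

/-- The flip map `τ : A ⊗ A → A ⊗ A`. -/
noncomputable def flipMap (k A : Type*) [Field k] [AddCommGroup A] [Module k A] :
    A ⊗[k] A →ₗ[k] A ⊗[k] A :=
  (TensorProduct.comm k A A).toLinearMap

/-- A map `A ⊗ A → A ⊗ A` acting on the last two factors of `(A ⊗ A) ⊗ A`
(conjugation of `1 ⊗ f` by the associator). -/
noncomputable def lastTwo (k A : Type*) [Field k] [AddCommGroup A] [Module k A]
    (f : A ⊗[k] A →ₗ[k] A ⊗[k] A) :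
    (A ⊗[k] A) ⊗[k] A →ₗ[k] (A ⊗[k] A) ⊗[k] A :=
  (TensorProduct.assoc k A A A).symm.toLinearMap ∘ₗ lTensor A f ∘ₗ
    (TensorProduct.assoc k A A A).toLinearMap

/-- A map `A ⊗ A → A ⊗ A` acting on the first two factors of `A ⊗ (A ⊗ A)`
(conjugation of `f ⊗ 1` by the associator). -/
noncomputable def firstTwo (k A : Type*) [Field k] [AddCommGroup A] [Module k A]
    (f : A ⊗[k] A →ₗ[k] A ⊗[k] A) :
    A ⊗[k] (A ⊗[k] A) →ₗ[k] A ⊗[k] (A ⊗[k] A) :=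
  (TensorProduct.assoc k A A A).toLinearMap ∘ₗ rTensor A f ∘ₗ
    (TensorProduct.assoc k A A A).symm.toLinearMap

/-- `(1 ⊗ e) : A ⊗ A → A`, i.e. `1 ⊗ e` followed by the right unitor. -/
noncomputable def oneCounit (k A : Type*) [Field k] [AddCommGroup A] [Module k A]
    (e : A →ₗ[k] k) : A ⊗[k] A →ₗ[k] A :=
  (TensorProduct.rid k A).toLinearMap ∘ₗ lTensor A e

/-- `(e ⊗ 1) : A ⊗ A → A`, i.e. `e ⊗ 1` followed by the left unitor. -/
noncomputable def counitOne (k A : Type*) [Field k] [AddCommGroup A] [Module k A]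
    (e : A →ₗ[k] k) : A ⊗[k] A →ₗ[k] A :=
  (TensorProduct.lid k A).toLinearMap ∘ₗ rTensor A e

/-!
Applying `e ⊗ 1 ⊗ 1` to the fusion equation of `t₁` and commuting it past `1 ⊗ t₁` turns the
fusion equation into axiom (a). Dually, after reassociating, applying `1 ⊗ 1 ⊗ e` to the fusion
equation of `t₂` gives the mirror identity for `(1 ⊗ e) ∘ t₂`, which is `m`. Axiom (c) follows
from `(1 ⊗ e) ∘ t₁ = 1 ⊗ e`, since `e ∘ (e ⊗ 1) = e ⊗ e = e ∘ (1 ⊗ e)`.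
-/

section

variable (e : A →ₗ[k] k)

@[simp]
lemma counitOne_tmul (a b : A) : counitOne k A e (a ⊗ₜ b) = e a • b := by
  simp [counitOne]

@[simp]
lemma oneCounit_tmul (a b : A) : oneCounit k A e (a ⊗ₜ b) = e b • a := by
  simp [oneCounit]

lemma counit_comp_counitOne : e ∘ₗ counitOne k A e = mul' k k ∘ₗ map e e := by
  ext a b
  simp

lemma counit_comp_oneCounit : e ∘ₗ oneCounit k A e = mul' k k ∘ₗ map e e := by
  ext a b
  simp [mul_comm]

lemma rTensor_counitOne_comp_lastTwo (f : A ⊗[k] A →ₗ[k] A ⊗[k] A) :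
    rTensor A (counitOne k A e) ∘ₗ lastTwo k A f = f ∘ₗ rTensor A (counitOne k A e) := by
  ext a b c
  suffices ∀ x, rTensor A (counitOne k A e) ((TensorProduct.assoc k A A A).symm (a ⊗ₜ x)) =
      e a • x by simpa [lastTwo, ← smul_tmul'] using this (f (b ⊗ₜ c))
  intro x
  induction x using TensorProduct.induction_on <;> simp_all [tmul_add, smul_tmul']

lemma lTensor_oneCounit_comp_firstTwo (f : A ⊗[k] A →ₗ[k] A ⊗[k] A) :
    lTensor A (oneCounit k A e) ∘ₗ firstTwo k A f = f ∘ₗ lTensor A (oneCounit k A e) := by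
  ext a b c
  suffices ∀ x, lTensor A (oneCounit k A e) (TensorProduct.assoc k A A A (x ⊗ₜ c)) =
      e c • x by simpa [firstTwo, tmul_smul] using this (f (a ⊗ₜ b))
  intro x
  induction x using TensorProduct.induction_on <;> simp_all [add_tmul, tmul_smul]

lemma assoc_conj_lastTwo (f : A ⊗[k] A →ₗ[k] A ⊗[k] A) :
    (TensorProduct.assoc k A A A).conj (lastTwo k A f) = lTensor A f :=
  LinearEquiv.conj_conj_symm (TensorProduct.assoc k A A A) (lTensor A f)

lemma assoc_conj_rTensor (f : A ⊗[k] A →ₗ[k] A ⊗[k] A) :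
    (TensorProduct.assoc k A A A).conj (rTensor A f) = firstTwo k A f :=
  rfl

lemma counit_comp_counitOne_comp_of_counital {t : A ⊗[k] A →ₗ[k] A ⊗[k] A}
    (ht : oneCounit k A e ∘ₗ t = oneCounit k A e) :
    e ∘ₗ (counitOne k A e ∘ₗ t) = mul' k k ∘ₗ map e e := by
  rw [← comp_assoc, counit_comp_counitOne, ← counit_comp_oneCounit, comp_assoc, ht]

lemma comp_rTensor_counitOne_comp_of_fusion {t : A ⊗[k] A →ₗ[k] A ⊗[k] A}
    (ht : rTensor A t ∘ₗ rTensor A (flipMap k A) ∘ₗ lastTwo k A t ∘ₗ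
        rTensor A (flipMap k A) ∘ₗ lastTwo k A t = lastTwo k A t ∘ₗ rTensor A t) :
    t ∘ₗ rTensor A (counitOne k A e ∘ₗ t) =
      rTensor A (counitOne k A e ∘ₗ t) ∘ₗ rTensor A (flipMap k A) ∘ₗ
        lastTwo k A t ∘ₗ rTensor A (flipMap k A) ∘ₗ lastTwo k A t := by
  have h := congrArg (rTensor A (counitOne k A e) ∘ₗ ·) ht
  simp only [← comp_assoc, rTensor_counitOne_comp_lastTwo] at h
  simp only [rTensor_comp, ← comp_assoc]
  exact h.symm

lemma comp_lTensor_oneCounit_comp_of_fusion {t : A ⊗[k] A →ₗ[k] A ⊗[k] A}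
    (ht : lastTwo k A t ∘ₗ lastTwo k A (flipMap k A) ∘ₗ rTensor A t ∘ₗ
        lastTwo k A (flipMap k A) ∘ₗ rTensor A t = rTensor A t ∘ₗ lastTwo k A t) :
    t ∘ₗ lTensor A (oneCounit k A e ∘ₗ t) =
      lTensor A (oneCounit k A e ∘ₗ t) ∘ₗ lTensor A (flipMap k A) ∘ₗ
        firstTwo k A t ∘ₗ lTensor A (flipMap k A) ∘ₗ firstTwo k A t := by
  have h := congrArg
    (fun f ↦ lTensor A (oneCounit k A e) ∘ₗ (TensorProduct.assoc k A A A).conj f) ht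
  simp only [LinearEquiv.conj_comp, assoc_conj_lastTwo, assoc_conj_rTensor, ← comp_assoc,
    lTensor_oneCounit_comp_firstTwo] at h
  simp only [lTensor_comp, ← comp_assoc]
  exact h.symm

end

theorem multiplierBialgebra_of_multiplierBimonoid_general
    (t₁ t₂ : A ⊗[k] A →ₗ[k] A ⊗[k] A) (e : A →ₗ[k] k)
    -- `t₁` is a counital fusion morphism
    (hfus₁ : rTensor A t₁ ∘ₗ rTensor A (flipMap k A) ∘ₗ lastTwo k A t₁ ∘ₗ
        rTensor A (flipMap k A) ∘ₗ lastTwo k A t₁ =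
      lastTwo k A t₁ ∘ₗ rTensor A t₁)
    (hcou₁ : oneCounit k A e ∘ₗ t₁ = oneCounit k A e)
    -- `t₂` is a counital fusion morphism in the reverse category
    (hfus₂ : lastTwo k A t₂ ∘ₗ lastTwo k A (flipMap k A) ∘ₗ rTensor A t₂ ∘ₗ
        lastTwo k A (flipMap k A) ∘ₗ rTensor A t₂ =
      rTensor A t₂ ∘ₗ lastTwo k A t₂)
    -- the two counit conditions give the same multiplication `m`
    (hm : counitOne k A e ∘ₗ t₁ = oneCounit k A e ∘ₗ t₂) :
    -- axiom (c): `e ∘ m = (multiplication of k) ∘ (e ⊗ e)`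
    (e ∘ₗ (counitOne k A e ∘ₗ t₁) = LinearMap.mul' k k ∘ₗ TensorProduct.map e e) ∧
    -- axiom (a): `t₁ ∘ (m ⊗ 1) = (m ⊗ 1) ∘ (τ ⊗ 1) ∘ (1 ⊗ t₁) ∘ (τ ⊗ 1) ∘ (1 ⊗ t₁)`
    (t₁ ∘ₗ rTensor A (counitOne k A e ∘ₗ t₁) =
      rTensor A (counitOne k A e ∘ₗ t₁) ∘ₗ rTensor A (flipMap k A) ∘ₗ
        lastTwo k A t₁ ∘ₗ rTensor A (flipMap k A) ∘ₗ lastTwo k A t₁) ∧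
    -- equivalently, `t₂ ∘ (1 ⊗ m) = (1 ⊗ m) ∘ (1 ⊗ τ) ∘ (t₂ ⊗ 1) ∘ (1 ⊗ τ) ∘ (t₂ ⊗ 1)`
    (t₂ ∘ₗ lTensor A (counitOne k A e ∘ₗ t₁) =
      lTensor A (counitOne k A e ∘ₗ t₁) ∘ₗ lTensor A (flipMap k A) ∘ₗ
        firstTwo k A t₂ ∘ₗ lTensor A (flipMap k A) ∘ₗ firstTwo k A t₂) := by
  refine ⟨counit_comp_counitOne_comp_of_counital e hcou₁,
    comp_rTensor_counitOne_comp_of_fusion e hfus₁, ?_⟩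
  rw [hm]
  exact comp_lTensor_oneCounit_comp_of_fusion e hfus₂

/-- A multiplier bimonoid `(t₁, t₂, e)` in `vec` whose multiplication `m` is
surjective and non-degenerate, and for which `(m ⊗ 1)(τ ⊗ 1)(1 ⊗ t₁)` and
`(1 ⊗ m)(1 ⊗ τ)(t₂ ⊗ 1)` are surjective, is a multiplier bialgebra; in
particular the multiplier bialgebra axioms (c) and (a) hold. -/
theorem multiplierBialgebra_of_multiplierBimonoid
    (t₁ t₂ : A ⊗[k] A →ₗ[k] A ⊗[k] A) (e : A →ₗ[k] k)
    -- `t₁` is a counital fusion morphism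
    (hfus₁ : rTensor A t₁ ∘ₗ rTensor A (flipMap k A) ∘ₗ lastTwo k A t₁ ∘ₗ
        rTensor A (flipMap k A) ∘ₗ lastTwo k A t₁ =
      lastTwo k A t₁ ∘ₗ rTensor A t₁)
    (hcou₁ : oneCounit k A e ∘ₗ t₁ = oneCounit k A e)
    -- `t₂` is a counital fusion morphism in the reverse category
    (hfus₂ : lastTwo k A t₂ ∘ₗ lastTwo k A (flipMap k A) ∘ₗ rTensor A t₂ ∘ₗ
        lastTwo k A (flipMap k A) ∘ₗ rTensor A t₂ =
      rTensor A t₂ ∘ₗ lastTwo k A t₂)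
    (hcou₂ : counitOne k A e ∘ₗ t₂ = counitOne k A e)
    -- compatibility: `(t₂ ⊗ 1) ∘ (1 ⊗ t₁) = (1 ⊗ t₁) ∘ (t₂ ⊗ 1)`
    (hcompat : rTensor A t₂ ∘ₗ lastTwo k A t₁ = lastTwo k A t₁ ∘ₗ rTensor A t₂)
    -- the two counit conditions give the same multiplication `m`
    (hm : counitOne k A e ∘ₗ t₁ = oneCounit k A e ∘ₗ t₂)
    -- surjectivity assumptions
    (hmsurj : Function.Surjective (counitOne k A e ∘ₗ t₁))
    (hsurj₁ : Function.Surjective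
      (rTensor A (counitOne k A e ∘ₗ t₁) ∘ₗ rTensor A (flipMap k A) ∘ₗ
        lastTwo k A t₁))
    (hsurj₂ : Function.Surjective
      (lTensor A (counitOne k A e ∘ₗ t₁) ∘ₗ lTensor A (flipMap k A) ∘ₗ
        (TensorProduct.assoc k A A A).toLinearMap ∘ₗ rTensor A t₂))
    -- non-degeneracy of `m`
    (hnd₁ : ∀ a b : A,
      (∀ x : A, (counitOne k A e ∘ₗ t₁) (a ⊗ₜ[k] x) =
        (counitOne k A e ∘ₗ t₁) (b ⊗ₜ[k] x)) → a = b)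
    (hnd₂ : ∀ a b : A,
      (∀ x : A, (counitOne k A e ∘ₗ t₁) (x ⊗ₜ[k] a) =
        (counitOne k A e ∘ₗ t₁) (x ⊗ₜ[k] b)) → a = b) :
    -- axiom (c): `e ∘ m = (multiplication of k) ∘ (e ⊗ e)`
    (e ∘ₗ (counitOne k A e ∘ₗ t₁) = LinearMap.mul' k k ∘ₗ TensorProduct.map e e) ∧
    -- axiom (a): `t₁ ∘ (m ⊗ 1) = (m ⊗ 1) ∘ (τ ⊗ 1) ∘ (1 ⊗ t₁) ∘ (τ ⊗ 1) ∘ (1 ⊗ t₁)`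
    (t₁ ∘ₗ rTensor A (counitOne k A e ∘ₗ t₁) =
      rTensor A (counitOne k A e ∘ₗ t₁) ∘ₗ rTensor A (flipMap k A) ∘ₗ
        lastTwo k A t₁ ∘ₗ rTensor A (flipMap k A) ∘ₗ lastTwo k A t₁) ∧
    -- equivalently, `t₂ ∘ (1 ⊗ m) = (1 ⊗ m) ∘ (1 ⊗ τ) ∘ (t₂ ⊗ 1) ∘ (1 ⊗ τ) ∘ (t₂ ⊗ 1)`
    (t₂ ∘ₗ lTensor A (counitOne k A e ∘ₗ t₁) =
      lTensor A (counitOne k A e ∘ₗ t₁) ∘ₗ lTensor A (flipMap k A) ∘ₗ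
        firstTwo k A t₂ ∘ₗ lTensor A (flipMap k A) ∘ₗ firstTwo k A t₂) :=
  multiplierBialgebra_of_multiplierBimonoid_general t₁ t₂ e hfus₁ hcou₁ hfus₂ hm
end

section
/- Let (t, e) be a counital fusion morphism on an object A of a braided monoidal category C. Then the functor G := (–) ⊗ A : C ⟶ C together with ε_X := (1_X ⊗ e) ≫ ρ_X : X ⊗ A ⟶ X and Ǧ₂^{X,Y} := (1_X ⊗ b_{A,Y} ⊗ 1_A) ≫ (1_{X⊗Y} ⊗ t) ≫ (1_X ⊗ b_{A,Y}⁻¹ ⊗ 1_A) : (X ⊗ A) ⊗ (Y ⊗ A) ⟶ ((X ⊗ A) ⊗ Y) ⊗ A is a right multiplier bicomonad on C: for all objects X, Y, Z, (1_{GX} ⊗ Ǧ₂^{Y,Z}) ≫ Ǧ₂^{X, GY⊗Z} ≫ G(Ǧ₂^{X,Y} ⊗ 1_Z) = (Ǧ₂^{X,Y} ⊗ 1_{GZ}) ≫ Ǧ₂^{GX⊗Y, Z} and Ǧ₂^{X,Y} ≫ ε_{GX⊗Y} = 1_{GX} ⊗ ε_Y. -/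
open CategoryTheory Category MonoidalCategory

universe v u

variable {C : Type u} [Category.{v} C] [MonoidalCategory C] [BraidedCategory C]

/-- The counit `ε_X := (1_X ⊗ e) ≫ ρ_X` of the right multiplier bicomonad
induced by a counital fusion morphism on the functor `(–) ⊗ A`. -/
def epsOf (A : C) (e : A ⟶ 𝟙_ C) (X : C) : X ⊗ A ⟶ X :=
  (X ◁ e) ≫ (ρ_ X).hom

/-- The binary structure
`Ǧ₂^{X,Y} := (1_X ⊗ b_{A,Y} ⊗ 1_A) ≫ (1_{X⊗Y} ⊗ t) ≫ (1_X ⊗ b_{A,Y}⁻¹ ⊗ 1_A)`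
of the right multiplier bicomonad induced by a counital fusion morphism on the
functor `(–) ⊗ A`, with all coherence isomorphisms made explicit. -/
def checkG₂ (A : C) (t : A ⊗ A ⟶ A ⊗ A) (X Y : C) :
    (X ⊗ A) ⊗ (Y ⊗ A) ⟶ ((X ⊗ A) ⊗ Y) ⊗ A :=
  (α_ X A (Y ⊗ A)).hom ≫
    (X ◁ ((α_ A Y A).inv ≫ ((β_ A Y).hom ▷ A) ≫ (α_ Y A A).hom ≫ (Y ◁ t) ≫
      (α_ Y A A).inv ≫ ((β_ A Y).inv ▷ A))) ≫
    (α_ X (A ⊗ Y) A).inv ≫ ((α_ X A Y).inv ▷ A)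

/-!
Write `T_W := (b_{A,W} ⊗ 1_A) ≫ (1_W ⊗ t) ≫ (b_{A,W}⁻¹ ⊗ 1_A)` (`fusionPast A t W`), so that
`Ǧ₂^{X,Y}` is `1_X ⊗ T_Y` up to associators. Counitality of `t` passes directly to `T_Y`, which
gives the counit law. For coassociativity, `1_X` can be stripped; expanding `T_{(Y ⊗ A) ⊗ Z}`
into braidings exhibits, under `1_Y ⊗ -`, the fusion equation with `1_A ⊗ t` replaced by
`1_A ⊗ T_Z`. That mixed equation is `1_Z ⊗ (fusion equation)` conjugated by the braiding of
`A ⊗ A` past `Z`: this conjugation carries `1_A ⊗ t` to `1_A ⊗ T_Z` and, by naturality of the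
braiding, `g ⊗ 1_A` to `g ⊗ 1_{Z ⊗ A}` for every `g : A ⊗ A ⟶ A ⊗ A`.
-/

open BraidedCategory

section

variable (A : C) (t : A ⊗ A ⟶ A ⊗ A)

def fusionPast (W : C) : (A ⊗ W) ⊗ A ⟶ (A ⊗ W) ⊗ A :=
  ((β_ A W).hom ▷ A) ≫ (α_ W A A).hom ≫ (W ◁ t) ≫ (α_ W A A).inv ≫ ((β_ A W).inv ▷ A)

lemma checkG₂_eq_fusionPast (X Y : C) :
    checkG₂ A t X Y = (α_ X A (Y ⊗ A)).hom ≫ (X ◁ ((α_ A Y A).inv ≫ fusionPast A t Y)) ≫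
      (α_ X (A ⊗ Y) A).inv ≫ ((α_ X A Y).inv ▷ A) := by
  simp only [checkG₂, fusionPast]

lemma fusionPast_comp_whiskerLeft_counit (e : A ⟶ 𝟙_ C) (hcou : Counital A t e) (Y : C) :
    fusionPast A t Y ≫ ((A ⊗ Y) ◁ e) = (A ⊗ Y) ◁ e := by
  simp only [fusionPast, assoc]
  rw [← whisker_exchange, ← associator_inv_naturality_right_assoc,
    ← MonoidalCategory.whiskerLeft_comp_assoc, hcou,
    associator_inv_naturality_right_assoc, Iso.hom_inv_id_assoc, ← whisker_exchange_assoc,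
    hom_inv_whiskerRight, comp_id]

def onFirstTwoStrands (Z : C) (g : A ⊗ A ⟶ A ⊗ A) :
    A ⊗ ((A ⊗ Z) ⊗ A) ⟶ A ⊗ ((A ⊗ Z) ⊗ A) :=
  𝟙 _ ⊗≫ (g ▷ (Z ⊗ A)) ⊗≫ 𝟙 _

def braidPastIso (Z : C) : Z ⊗ (A ⊗ (A ⊗ A)) ≅ A ⊗ ((A ⊗ Z) ⊗ A) :=
  whiskerLeftIso Z (α_ A A A).symm ≪≫ (α_ Z (A ⊗ A) A).symm ≪≫
    whiskerRightIso (β_ (A ⊗ A) Z).symm A ≪≫ whiskerRightIso (α_ A A Z) A ≪≫ α_ A (A ⊗ Z) A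

lemma braidPastIso_conj_whiskerLeft_whiskerLeft (Z : C) :
    (braidPastIso A Z).conj (Z ◁ A ◁ t) = A ◁ fusionPast A t Z := by
  rw [Iso.conj_apply]
  calc _ = 𝟙 _ ⊗≫ (A ◁ ((β_ A Z).hom ▷ A)) ⊗≫
          (((β_ A Z).hom ▷ (A ⊗ A)) ≫ ((Z ⊗ A) ◁ t) ≫ ((β_ A Z).inv ▷ (A ⊗ A))) ⊗≫
          (A ◁ ((β_ A Z).inv ▷ A)) ⊗≫ 𝟙 _ := by
        simp only [braidPastIso, Iso.trans_hom, Iso.trans_inv, Iso.symm_hom, Iso.symm_inv,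
          whiskerLeftIso_hom, whiskerLeftIso_inv, whiskerRightIso_hom, whiskerRightIso_inv,
          braiding_tensor_left_hom, braiding_tensor_left_inv]
        monoidal
    _ = 𝟙 _ ⊗≫ (A ◁ ((β_ A Z).hom ▷ A)) ⊗≫
          (((A ⊗ Z) ◁ t) ≫ ((β_ A Z).hom ▷ (A ⊗ A)) ≫ ((β_ A Z).inv ▷ (A ⊗ A))) ⊗≫
          (A ◁ ((β_ A Z).inv ▷ A)) ⊗≫ 𝟙 _ := by
        rw [← whisker_exchange_assoc]
    _ = A ◁ fusionPast A t Z := by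
        rw [← comp_whiskerRight, Iso.hom_inv_id, id_whiskerRight, comp_id]
        simp only [fusionPast]
        monoidal

lemma braidPastIso_conj_whiskerLeft_whiskerRight (Z : C) (g : A ⊗ A ⟶ A ⊗ A) :
    (braidPastIso A Z).conj (Z ◁ ((α_ A A A).inv ≫ (g ▷ A) ≫ (α_ A A A).hom)) =
      onFirstTwoStrands A Z g := by
  have hnat : (β_ (A ⊗ A) Z).hom ≫ (Z ◁ g) ≫ (β_ (A ⊗ A) Z).inv = g ▷ Z := by
    rw [← braiding_naturality_left_assoc, Iso.hom_inv_id, comp_id]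
  calc _ = 𝟙 _ ⊗≫ (((β_ (A ⊗ A) Z).hom ≫ (Z ◁ g) ≫ (β_ (A ⊗ A) Z).inv) ▷ A) ⊗≫ 𝟙 _ := by
        simp only [Iso.conj_apply, braidPastIso, Iso.trans_hom, Iso.trans_inv, Iso.symm_hom,
          Iso.symm_inv, whiskerLeftIso_hom, whiskerLeftIso_inv, whiskerRightIso_hom,
          whiskerRightIso_inv]
        monoidal
    _ = _ := by rw [hnat, onFirstTwoStrands]; monoidal

lemma fusionEq_whiskerLeft_fusionPast (Z : C) (hfus : FusionEq A t) :
    (A ◁ fusionPast A t Z) ≫ onFirstTwoStrands A Z (β_ A A).hom ≫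
        (A ◁ fusionPast A t Z) ≫ onFirstTwoStrands A Z (β_ A A).inv ≫
        onFirstTwoStrands A Z t =
      onFirstTwoStrands A Z t ≫ (A ◁ fusionPast A t Z) := by
  simp only [← braidPastIso_conj_whiskerLeft_whiskerLeft,
    ← braidPastIso_conj_whiskerLeft_whiskerRight, ← Iso.conj_comp, ← whiskerLeft_comp]
  congr 2
  simpa only [FusionEq, assoc, Iso.hom_inv_id_assoc] using hfus

lemma fusionPast_tensor (Y Z : C) :
    fusionPast A t ((Y ⊗ A) ⊗ Z) =
      𝟙 ((A ⊗ ((Y ⊗ A) ⊗ Z)) ⊗ A) ⊗≫ ((β_ A Y).hom ▷ ((A ⊗ Z) ⊗ A)) ⊗≫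
        (Y ◁ (onFirstTwoStrands A Z (β_ A A).hom ≫ (A ◁ fusionPast A t Z) ≫
          onFirstTwoStrands A Z (β_ A A).inv)) ⊗≫
        ((β_ A Y).inv ▷ ((A ⊗ Z) ⊗ A)) ⊗≫ 𝟙 ((A ⊗ ((Y ⊗ A) ⊗ Z)) ⊗ A) := by
  simp only [fusionPast, onFirstTwoStrands, braiding_tensor_right_hom, braiding_tensor_right_inv]
  monoidal

lemma fusionPast_coassoc (hfus : FusionEq A t) (Y Z : C) :
    ((A ⊗ Y) ◁ fusionPast A t Z) ⊗≫ fusionPast A t ((Y ⊗ A) ⊗ Z) ⊗≫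
        ((fusionPast A t Y ▷ Z) ▷ A) =
      𝟙 ((A ⊗ Y) ⊗ ((A ⊗ Z) ⊗ A)) ⊗≫ (fusionPast A t Y ▷ (Z ⊗ A)) ⊗≫
        ((A ⊗ Y) ◁ fusionPast A t Z) ⊗≫ 𝟙 ((((A ⊗ Y) ⊗ A) ⊗ Z) ⊗ A) := by
  calc _ = 𝟙 _ ⊗≫ (((A ⊗ Y) ◁ fusionPast A t Z) ≫ ((β_ A Y).hom ▷ ((A ⊗ Z) ⊗ A))) ⊗≫
          (Y ◁ (onFirstTwoStrands A Z (β_ A A).hom ≫ (A ◁ fusionPast A t Z) ≫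
            onFirstTwoStrands A Z (β_ A A).inv)) ⊗≫
          (((β_ A Y).inv ▷ ((A ⊗ Z) ⊗ A)) ≫ ((β_ A Y).hom ▷ ((A ⊗ Z) ⊗ A))) ⊗≫
          (Y ◁ (t ▷ (Z ⊗ A))) ⊗≫ ((β_ A Y).inv ▷ ((A ⊗ Z) ⊗ A)) ⊗≫ 𝟙 _ := by
        rw [fusionPast_tensor]; simp only [fusionPast, onFirstTwoStrands]; monoidal
    _ = 𝟙 _ ⊗≫ ((β_ A Y).hom ▷ ((A ⊗ Z) ⊗ A)) ⊗≫
          (Y ◁ ((A ◁ fusionPast A t Z) ≫ onFirstTwoStrands A Z (β_ A A).hom ≫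
            (A ◁ fusionPast A t Z) ≫ onFirstTwoStrands A Z (β_ A A).inv ≫
            onFirstTwoStrands A Z t)) ⊗≫
          ((β_ A Y).inv ▷ ((A ⊗ Z) ⊗ A)) ⊗≫ 𝟙 _ := by
        rw [whisker_exchange, inv_hom_whiskerRight]; simp only [onFirstTwoStrands]; monoidal
    _ = 𝟙 _ ⊗≫ ((β_ A Y).hom ▷ ((A ⊗ Z) ⊗ A)) ⊗≫
          (Y ◁ (onFirstTwoStrands A Z t ≫ (A ◁ fusionPast A t Z))) ⊗≫
          ((β_ A Y).inv ▷ ((A ⊗ Z) ⊗ A)) ⊗≫ 𝟙 _ := by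
        rw [fusionEq_whiskerLeft_fusionPast A t Z hfus]
    _ = 𝟙 _ ⊗≫ ((β_ A Y).hom ▷ ((A ⊗ Z) ⊗ A)) ⊗≫ (Y ◁ (t ▷ (Z ⊗ A))) ⊗≫
          (((Y ⊗ A) ◁ fusionPast A t Z) ≫ ((β_ A Y).inv ▷ ((A ⊗ Z) ⊗ A))) ⊗≫ 𝟙 _ := by
        simp only [onFirstTwoStrands]; monoidal
    _ = _ := by
        rw [whisker_exchange]; simp only [fusionPast]; monoidal

lemma checkG₂_coassoc (hfus : FusionEq A t) (X Y Z : C) :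
    (α_ (X ⊗ A) (Y ⊗ A) (Z ⊗ A)).hom ≫ ((X ⊗ A) ◁ checkG₂ A t Y Z) ≫
        checkG₂ A t X ((Y ⊗ A) ⊗ Z) ≫
        (((α_ (X ⊗ A) (Y ⊗ A) Z).inv ≫ (checkG₂ A t X Y ▷ Z)) ▷ A) =
      (checkG₂ A t X Y ▷ (Z ⊗ A)) ≫ checkG₂ A t ((X ⊗ A) ⊗ Y) Z := by
  simp only [checkG₂_eq_fusionPast]
  calc _ = 𝟙 _ ⊗≫ (X ◁ (((A ⊗ Y) ◁ fusionPast A t Z) ⊗≫ fusionPast A t ((Y ⊗ A) ⊗ Z) ⊗≫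
            ((fusionPast A t Y ▷ Z) ▷ A))) ⊗≫ 𝟙 _ := by
        monoidal
    _ = _ := by
        rw [fusionPast_coassoc A t hfus]; monoidal

lemma checkG₂_counit (e : A ⟶ 𝟙_ C) (hcou : Counital A t e) (X Y : C) :
    checkG₂ A t X Y ≫ epsOf A e ((X ⊗ A) ⊗ Y) = (X ⊗ A) ◁ epsOf A e Y := by
  calc _ = 𝟙 _ ⊗≫ (X ◁ ((α_ A Y A).inv ≫ fusionPast A t Y ≫ ((A ⊗ Y) ◁ e))) ⊗≫ 𝟙 _ := by
        rw [checkG₂_eq_fusionPast]; simp only [epsOf]; monoidal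
    _ = _ := by
        rw [fusionPast_comp_whiskerLeft_counit A t e hcou]; simp only [epsOf]; monoidal

end

/-- For a counital fusion morphism `(t, e)` on `A`, the functor `(–) ⊗ A`
equipped with `checkG₂` and `epsOf` is a right multiplier bicomonad. -/
theorem tensorRight_rightMultiplierBicomonad (A : C) (t : A ⊗ A ⟶ A ⊗ A)
    (e : A ⟶ 𝟙_ C) (hfus : FusionEq A t) (hcou : Counital A t e) :
    (∀ X Y Z : C,
      (α_ (X ⊗ A) (Y ⊗ A) (Z ⊗ A)).hom ≫ ((X ⊗ A) ◁ checkG₂ A t Y Z) ≫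
          checkG₂ A t X ((Y ⊗ A) ⊗ Z) ≫
          (((α_ (X ⊗ A) (Y ⊗ A) Z).inv ≫ (checkG₂ A t X Y ▷ Z)) ▷ A) =
        (checkG₂ A t X Y ▷ (Z ⊗ A)) ≫ checkG₂ A t ((X ⊗ A) ⊗ Y) Z) ∧
    (∀ X Y : C,
      checkG₂ A t X Y ≫ epsOf A e ((X ⊗ A) ⊗ Y) = (X ⊗ A) ◁ epsOf A e Y) :=
  ⟨checkG₂_coassoc A t hfus, checkG₂_counit A t e hcou⟩
end

section
/- Let (G, Ǧ₂, Ĝ₂, ε) be a multiplier bicomonad on a monoidal category C with induced natural transformation G₂^{X,Y} := Ǧ₂^{X,Y} ≫ G(ε_X ⊗ 1_Y) = Ĝ₂^{X,Y} ≫ G(1_X ⊗ ε_Y) : GX ⊗ GY ⟶ G(X ⊗ Y), and let (V, v̌, v̂) and (W, w̌, ŵ) be comodules over it. Then V ⊗ W is a comodule via x̌_Y := (1_V ⊗ w̌_Y) ≫ v̌_{W⊗Y} and x̂_X := (v̂_X ⊗ 1_W) ≫ ŵ_{X⊗V}; in particular the compatibility (1_{GX} ⊗ x̌_Y) ≫ G₂^{X,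 V⊗W⊗Y} = (x̂_X ⊗ 1_{GY}) ≫ G₂^{X⊗V⊗W, Y} holds for all objects X, Y. -/
open CategoryTheory Category MonoidalCategory

universe v u

variable {C : Type u} [Category.{v} C] [MonoidalCategory C]

/-!
Each axiom for `V ⊗ W` follows by applying the corresponding axioms for `W` and for `V` one
after the other, the factor of the other comodule being carried along by naturality: the
structure maps of `G` (`Gc₂`, `Gh₂`, `G₂`) are moved past the coactions, and what remains is
coherence of the associators.
-/

namespace MultiplierBicomonad

section

variable (G : C ⥤ C) {V W : C}

theorem naturality_of_eq_comp_map_whiskerRight_counit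
    (Gc₂ : ∀ X Y : C, G.obj X ⊗ G.obj Y ⟶ G.obj (G.obj X ⊗ Y))
    (hGcnat : ∀ {X X' Y Y' : C} (f : X ⟶ X') (g : Y ⟶ Y'),
      (G.map f ⊗ₘ G.map g) ≫ Gc₂ X' Y' = Gc₂ X Y ≫ G.map (G.map f ⊗ₘ g))
    (ε : ∀ X : C, G.obj X ⟶ X)
    (hεnat : ∀ {X Y : C} (f : X ⟶ Y), G.map f ≫ ε Y = ε X ≫ f)
    (G₂ : ∀ X Y : C, G.obj X ⊗ G.obj Y ⟶ G.obj (X ⊗ Y))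
    (hG₂ : ∀ X Y : C, G₂ X Y = Gc₂ X Y ≫ G.map (ε X ▷ Y))
    {X X' Y Y' : C} (f : X ⟶ X') (g : Y ⟶ Y') :
    (G.map f ⊗ₘ G.map g) ≫ G₂ X' Y' = G₂ X Y ≫ G.map (f ⊗ₘ g) := by
  rw [hG₂, hG₂, reassoc_of% hGcnat, assoc, ← G.map_comp, ← G.map_comp]
  simp only [← tensorHom_id, tensorHom_comp_tensorHom, hεnat, comp_id, id_comp]

def tensorRightCoaction (vc : ∀ Y : C, V ⊗ G.obj Y ⟶ G.obj (V ⊗ Y))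
    (wc : ∀ Y : C, W ⊗ G.obj Y ⟶ G.obj (W ⊗ Y)) (Y : C) :
    (V ⊗ W) ⊗ G.obj Y ⟶ G.obj ((V ⊗ W) ⊗ Y) :=
  (α_ V W (G.obj Y)).hom ≫ (V ◁ wc Y) ≫ vc (W ⊗ Y) ≫ G.map (α_ V W Y).inv

def tensorLeftCoaction (vh : ∀ X : C, G.obj X ⊗ V ⟶ G.obj (X ⊗ V))
    (wh : ∀ X : C, G.obj X ⊗ W ⟶ G.obj (X ⊗ W)) (X : C) :
    G.obj X ⊗ (V ⊗ W) ⟶ G.obj (X ⊗ (V ⊗ W)) :=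
  (α_ (G.obj X) V W).inv ≫ (vh X ▷ W) ≫ wh (X ⊗ V) ≫ G.map (α_ X V W).hom

theorem tensorRightCoaction_coassoc
    (Gc₂ : ∀ X Y : C, G.obj X ⊗ G.obj Y ⟶ G.obj (G.obj X ⊗ Y))
    (hGc : ∀ {X X' : C} (f : X ⟶ X') (Z : C),
      (G.map f ▷ G.obj Z) ≫ Gc₂ X' Z = Gc₂ X Z ≫ G.map (G.map f ▷ Z))
    (vc : ∀ Y : C, V ⊗ G.obj Y ⟶ G.obj (V ⊗ Y))
    (wc : ∀ Y : C, W ⊗ G.obj Y ⟶ G.obj (W ⊗ Y))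
    (hvcnat : ∀ {Y Y' : C} (g : Y ⟶ Y'),
      (V ◁ G.map g) ≫ vc Y' = vc Y ≫ G.map (V ◁ g))
    (hvc : ∀ Y Z : C,
      (α_ V (G.obj Y) (G.obj Z)).hom ≫ (V ◁ Gc₂ Y Z) ≫ vc (G.obj Y ⊗ Z) ≫
          G.map ((α_ V (G.obj Y) Z).inv ≫ (vc Y ▷ Z)) =
        (vc Y ▷ G.obj Z) ≫ Gc₂ (V ⊗ Y) Z)
    (hwc : ∀ Y Z : C,
      (α_ W (G.obj Y) (G.obj Z)).hom ≫ (W ◁ Gc₂ Y Z) ≫ wc (G.obj Y ⊗ Z) ≫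
          G.map ((α_ W (G.obj Y) Z).inv ≫ (wc Y ▷ Z)) =
        (wc Y ▷ G.obj Z) ≫ Gc₂ (W ⊗ Y) Z)
    (Y Z : C) :
    (α_ (V ⊗ W) (G.obj Y) (G.obj Z)).hom ≫ ((V ⊗ W) ◁ Gc₂ Y Z) ≫
        tensorRightCoaction G vc wc (G.obj Y ⊗ Z) ≫
        G.map ((α_ (V ⊗ W) (G.obj Y) Z).inv ≫ (tensorRightCoaction G vc wc Y ▷ Z)) =
      (tensorRightCoaction G vc wc Y ▷ G.obj Z) ≫ Gc₂ ((V ⊗ W) ⊗ Y) Z := by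
  simp only [tensorRightCoaction, comp_whiskerRight, Functor.map_comp, assoc]
  slice_rhs 4 5 => rw [hGc]
  slice_rhs 3 4 => rw [← hvc (W ⊗ Y) Z]
  slice_rhs 2 3 => rw [associator_naturality_middle]
  slice_rhs 3 4 => rw [← whiskerLeft_comp, ← hwc Y Z]
  simp only [whiskerLeft_comp, assoc]
  slice_rhs 6 7 => rw [hvcnat]
  -- `monoidal` sees `G.map _` as an atom: coherence is checked outside and inside `G` separately
  simp only [assoc, ← G.map_comp]
  simp only [← assoc]
  congr 1
  · monoidal
  · congr 1; monoidal

theorem tensorRightCoaction_counit (ε : ∀ X : C, G.obj X ⟶ X)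
    (hεnat : ∀ {X Y : C} (f : X ⟶ Y), G.map f ≫ ε Y = ε X ≫ f)
    (vc : ∀ Y : C, V ⊗ G.obj Y ⟶ G.obj (V ⊗ Y))
    (wc : ∀ Y : C, W ⊗ G.obj Y ⟶ G.obj (W ⊗ Y))
    (hvce : ∀ Y : C, vc Y ≫ ε (V ⊗ Y) = V ◁ ε Y)
    (hwce : ∀ Y : C, wc Y ≫ ε (W ⊗ Y) = W ◁ ε Y) (Y : C) :
    tensorRightCoaction G vc wc Y ≫ ε ((V ⊗ W) ⊗ Y) = (V ⊗ W) ◁ ε Y := by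
  simp only [tensorRightCoaction, assoc, hεnat]
  rw [reassoc_of% hvce, ← whiskerLeft_comp_assoc, hwce]
  monoidal

theorem tensorLeftCoaction_coassoc
    (Gh₂ : ∀ X Y : C, G.obj X ⊗ G.obj Y ⟶ G.obj (X ⊗ G.obj Y))
    (hGh : ∀ (X : C) {Y Y' : C} (g : Y ⟶ Y'),
      (G.obj X ◁ G.map g) ≫ Gh₂ X Y' = Gh₂ X Y ≫ G.map (X ◁ G.map g))
    (vh : ∀ X : C, G.obj X ⊗ V ⟶ G.obj (X ⊗ V))
    (wh : ∀ X : C, G.obj X ⊗ W ⟶ G.obj (X ⊗ W))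
    (hwhnat : ∀ {X X' : C} (f : X ⟶ X'),
      (G.map f ▷ W) ≫ wh X' = wh X ≫ G.map (f ▷ W))
    (hvh : ∀ X Y : C,
      (Gh₂ X Y ▷ V) ≫ vh (X ⊗ G.obj Y) ≫
          G.map ((α_ X (G.obj Y) V).hom ≫ (X ◁ vh Y)) =
        (α_ (G.obj X) (G.obj Y) V).hom ≫ (G.obj X ◁ vh Y) ≫ Gh₂ X (Y ⊗ V))
    (hwh : ∀ X Y : C,
      (Gh₂ X Y ▷ W) ≫ wh (X ⊗ G.obj Y) ≫
          G.map ((α_ X (G.obj Y) W).hom ≫ (X ◁ wh Y)) =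
        (α_ (G.obj X) (G.obj Y) W).hom ≫ (G.obj X ◁ wh Y) ≫ Gh₂ X (Y ⊗ W))
    (X Y : C) :
    (Gh₂ X Y ▷ (V ⊗ W)) ≫ tensorLeftCoaction G vh wh (X ⊗ G.obj Y) ≫
        G.map ((α_ X (G.obj Y) (V ⊗ W)).hom ≫ (X ◁ tensorLeftCoaction G vh wh Y)) =
      (α_ (G.obj X) (G.obj Y) (V ⊗ W)).hom ≫ (G.obj X ◁ tensorLeftCoaction G vh wh Y) ≫
        Gh₂ X (Y ⊗ (V ⊗ W)) := by
  have hvh' := (Iso.eq_inv_comp _).mpr (hvh X Y).symm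
  have hwh' := (Iso.eq_inv_comp _).mpr (hwh X (Y ⊗ V)).symm
  simp only [tensorLeftCoaction, whiskerLeft_comp, Functor.map_comp, assoc]
  slice_rhs 5 6 => rw [hGh]
  slice_rhs 4 5 => rw [hwh']
  slice_rhs 3 4 => rw [associator_inv_naturality_middle]
  slice_rhs 4 5 => rw [← comp_whiskerRight, hvh']
  simp only [comp_whiskerRight, assoc]
  slice_rhs 7 8 => rw [hwhnat]
  simp only [assoc, ← G.map_comp]
  simp only [← assoc]
  congr 1
  · monoidal
  · congr 1; monoidal

theorem tensorLeftCoaction_counit (ε : ∀ X : C, G.obj X ⟶ X)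
    (hεnat : ∀ {X Y : C} (f : X ⟶ Y), G.map f ≫ ε Y = ε X ≫ f)
    (vh : ∀ X : C, G.obj X ⊗ V ⟶ G.obj (X ⊗ V))
    (wh : ∀ X : C, G.obj X ⊗ W ⟶ G.obj (X ⊗ W))
    (hvhe : ∀ Y : C, vh Y ≫ ε (Y ⊗ V) = ε Y ▷ V)
    (hwhe : ∀ Y : C, wh Y ≫ ε (Y ⊗ W) = ε Y ▷ W) (Y : C) :
    tensorLeftCoaction G vh wh Y ≫ ε (Y ⊗ (V ⊗ W)) = ε Y ▷ (V ⊗ W) := by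
  simp only [tensorLeftCoaction, assoc, hεnat]
  rw [reassoc_of% hwhe, ← comp_whiskerRight_assoc, hvhe]
  monoidal

theorem tensorCoaction_compat
    (G₂ : ∀ X Y : C, G.obj X ⊗ G.obj Y ⟶ G.obj (X ⊗ Y))
    (hG₂nat : ∀ {X X' Y Y' : C} (f : X ⟶ X') (g : Y ⟶ Y'),
      (G.map f ⊗ₘ G.map g) ≫ G₂ X' Y' = G₂ X Y ≫ G.map (f ⊗ₘ g))
    (vc : ∀ Y : C, V ⊗ G.obj Y ⟶ G.obj (V ⊗ Y))
    (vh : ∀ X : C, G.obj X ⊗ V ⟶ G.obj (X ⊗ V))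
    (hvcompat : ∀ X Y : C,
      (α_ (G.obj X) V (G.obj Y)).hom ≫ (G.obj X ◁ vc Y) ≫ G₂ X (V ⊗ Y) =
        (vh X ▷ G.obj Y) ≫ G₂ (X ⊗ V) Y ≫ G.map (α_ X V Y).hom)
    (wc : ∀ Y : C, W ⊗ G.obj Y ⟶ G.obj (W ⊗ Y))
    (wh : ∀ X : C, G.obj X ⊗ W ⟶ G.obj (X ⊗ W))
    (hwcompat : ∀ X Y : C,
      (α_ (G.obj X) W (G.obj Y)).hom ≫ (G.obj X ◁ wc Y) ≫ G₂ X (W ⊗ Y) =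
        (wh X ▷ G.obj Y) ≫ G₂ (X ⊗ W) Y ≫ G.map (α_ X W Y).hom)
    (X Y : C) :
    (α_ (G.obj X) (V ⊗ W) (G.obj Y)).hom ≫ (G.obj X ◁ tensorRightCoaction G vc wc Y) ≫
        G₂ X ((V ⊗ W) ⊗ Y) =
      (tensorLeftCoaction G vh wh X ▷ G.obj Y) ≫ G₂ (X ⊗ (V ⊗ W)) Y ≫
        G.map (α_ X (V ⊗ W) Y).hom := by
  have hG₂L {X X' : C} (f : X ⟶ X') (Y : C) :
      (G.map f ▷ G.obj Y) ≫ G₂ X' Y = G₂ X Y ≫ G.map (f ▷ Y) := by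
    simpa using hG₂nat f (𝟙 Y)
  have hG₂R (X : C) {Y Y' : C} (g : Y ⟶ Y') :
      (G.obj X ◁ G.map g) ≫ G₂ X Y' = G₂ X Y ≫ G.map (X ◁ g) := by
    simpa using hG₂nat (𝟙 X) g
  have hvcompat' := (Iso.eq_inv_comp _).mpr (hvcompat X (W ⊗ Y))
  have hwcompat' := (Iso.eq_inv_comp _).mpr (hwcompat (X ⊗ V) Y)
  simp only [tensorRightCoaction, tensorLeftCoaction, comp_whiskerRight, whiskerLeft_comp,
    assoc]
  slice_lhs 5 6 => rw [hG₂R]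
  slice_lhs 4 5 => rw [hvcompat']
  slice_lhs 3 4 => rw [associator_inv_naturality_right]
  slice_lhs 4 5 => rw [whisker_exchange]
  slice_lhs 5 6 => rw [hwcompat']
  slice_rhs 4 5 => rw [hG₂L]
  simp only [assoc, ← G.map_comp]
  simp only [← assoc]
  congr 1
  · monoidal
  · congr 1; monoidal

end

end MultiplierBicomonad

open MultiplierBicomonad in
theorem comodule_tensor_of_multiplierBicomonad_general
    (G : C ⥤ C)
    (Gc₂ : ∀ X Y : C, G.obj X ⊗ G.obj Y ⟶ G.obj (G.obj X ⊗ Y))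
    (Gh₂ : ∀ X Y : C, G.obj X ⊗ G.obj Y ⟶ G.obj (X ⊗ G.obj Y))
    (ε : ∀ X : C, G.obj X ⟶ X)
    -- naturality
    (hGcnat : ∀ {X X' Y Y' : C} (f : X ⟶ X') (g : Y ⟶ Y'),
      (G.map f ⊗ₘ G.map g) ≫ Gc₂ X' Y' = Gc₂ X Y ≫ G.map (G.map f ⊗ₘ g))
    (hGhnat : ∀ {X X' Y Y' : C} (f : X ⟶ X') (g : Y ⟶ Y'),
      (G.map f ⊗ₘ G.map g) ≫ Gh₂ X' Y' = Gh₂ X Y ≫ G.map (f ⊗ₘ G.map g))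
    (hεnat : ∀ {X Y : C} (f : X ⟶ Y), G.map f ≫ ε Y = ε X ≫ f)
    -- the two induced semimonoidal structures coincide; call the common value `G₂`
    (G₂ : ∀ X Y : C, G.obj X ⊗ G.obj Y ⟶ G.obj (X ⊗ Y))
    (hG₂check : ∀ X Y : C, G₂ X Y = Gc₂ X Y ≫ G.map (ε X ▷ Y))
    -- a comodule `(V, vc, vh)`
    (V : C)
    (vc : ∀ Y : C, V ⊗ G.obj Y ⟶ G.obj (V ⊗ Y))
    (vh : ∀ X : C, G.obj X ⊗ V ⟶ G.obj (X ⊗ V))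
    (hvcnat : ∀ {Y Y' : C} (g : Y ⟶ Y'),
      (V ◁ G.map g) ≫ vc Y' = vc Y ≫ G.map (V ◁ g))
    (hvc : ∀ Y Z : C,
      (α_ V (G.obj Y) (G.obj Z)).hom ≫ (V ◁ Gc₂ Y Z) ≫ vc (G.obj Y ⊗ Z) ≫
          G.map ((α_ V (G.obj Y) Z).inv ≫ (vc Y ▷ Z)) =
        (vc Y ▷ G.obj Z) ≫ Gc₂ (V ⊗ Y) Z)
    (hvce : ∀ Y : C, vc Y ≫ ε (V ⊗ Y) = V ◁ ε Y)
    (hvh : ∀ X Y : C,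
      (Gh₂ X Y ▷ V) ≫ vh (X ⊗ G.obj Y) ≫
          G.map ((α_ X (G.obj Y) V).hom ≫ (X ◁ vh Y)) =
        (α_ (G.obj X) (G.obj Y) V).hom ≫ (G.obj X ◁ vh Y) ≫ Gh₂ X (Y ⊗ V))
    (hvhe : ∀ Y : C, vh Y ≫ ε (Y ⊗ V) = ε Y ▷ V)
    (hvcompat : ∀ X Y : C,
      (α_ (G.obj X) V (G.obj Y)).hom ≫ (G.obj X ◁ vc Y) ≫ G₂ X (V ⊗ Y) =
        (vh X ▷ G.obj Y) ≫ G₂ (X ⊗ V) Y ≫ G.map (α_ X V Y).hom)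
    -- a comodule `(W, wc, wh)`
    (W : C)
    (wc : ∀ Y : C, W ⊗ G.obj Y ⟶ G.obj (W ⊗ Y))
    (wh : ∀ X : C, G.obj X ⊗ W ⟶ G.obj (X ⊗ W))
    (hwhnat : ∀ {X X' : C} (f : X ⟶ X'),
      (G.map f ▷ W) ≫ wh X' = wh X ≫ G.map (f ▷ W))
    (hwc : ∀ Y Z : C,
      (α_ W (G.obj Y) (G.obj Z)).hom ≫ (W ◁ Gc₂ Y Z) ≫ wc (G.obj Y ⊗ Z) ≫
          G.map ((α_ W (G.obj Y) Z).inv ≫ (wc Y ▷ Z)) =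
        (wc Y ▷ G.obj Z) ≫ Gc₂ (W ⊗ Y) Z)
    (hwce : ∀ Y : C, wc Y ≫ ε (W ⊗ Y) = W ◁ ε Y)
    (hwh : ∀ X Y : C,
      (Gh₂ X Y ▷ W) ≫ wh (X ⊗ G.obj Y) ≫
          G.map ((α_ X (G.obj Y) W).hom ≫ (X ◁ wh Y)) =
        (α_ (G.obj X) (G.obj Y) W).hom ≫ (G.obj X ◁ wh Y) ≫ Gh₂ X (Y ⊗ W))
    (hwhe : ∀ Y : C, wh Y ≫ ε (Y ⊗ W) = ε Y ▷ W)
    (hwcompat : ∀ X Y : C,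
      (α_ (G.obj X) W (G.obj Y)).hom ≫ (G.obj X ◁ wc Y) ≫ G₂ X (W ⊗ Y) =
        (wh X ▷ G.obj Y) ≫ G₂ (X ⊗ W) Y ≫ G.map (α_ X W Y).hom)
    -- the candidate comodule structure on `V ⊗ W`
    (xc : ∀ Y : C, (V ⊗ W) ⊗ G.obj Y ⟶ G.obj ((V ⊗ W) ⊗ Y))
    (hxc : ∀ Y : C, xc Y =
      (α_ V W (G.obj Y)).hom ≫ (V ◁ wc Y) ≫ vc (W ⊗ Y) ≫ G.map (α_ V W Y).inv)
    (xh : ∀ X : C, G.obj X ⊗ (V ⊗ W) ⟶ G.obj (X ⊗ (V ⊗ W)))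
    (hxh : ∀ X : C, xh X =
      (α_ (G.obj X) V W).inv ≫ (vh X ▷ W) ≫ wh (X ⊗ V) ≫ G.map (α_ X V W).hom) :
    -- `(V ⊗ W, xc)` is a comodule over the right multiplier bicomonad
    (∀ Y Z : C,
      (α_ (V ⊗ W) (G.obj Y) (G.obj Z)).hom ≫ ((V ⊗ W) ◁ Gc₂ Y Z) ≫
          xc (G.obj Y ⊗ Z) ≫
          G.map ((α_ (V ⊗ W) (G.obj Y) Z).inv ≫ (xc Y ▷ Z)) =
        (xc Y ▷ G.obj Z) ≫ Gc₂ ((V ⊗ W) ⊗ Y) Z) ∧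
    (∀ Y : C, xc Y ≫ ε ((V ⊗ W) ⊗ Y) = (V ⊗ W) ◁ ε Y) ∧
    -- `(V ⊗ W, xh)` is a comodule over the left multiplier bicomonad
    (∀ X Y : C,
      (Gh₂ X Y ▷ (V ⊗ W)) ≫ xh (X ⊗ G.obj Y) ≫
          G.map ((α_ X (G.obj Y) (V ⊗ W)).hom ≫ (X ◁ xh Y)) =
        (α_ (G.obj X) (G.obj Y) (V ⊗ W)).hom ≫ (G.obj X ◁ xh Y) ≫
          Gh₂ X (Y ⊗ (V ⊗ W))) ∧
    (∀ Y : C, xh Y ≫ ε (Y ⊗ (V ⊗ W)) = ε Y ▷ (V ⊗ W)) ∧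
    -- in particular, the compatibility between `xc` and `xh` holds
    (∀ X Y : C,
      (α_ (G.obj X) (V ⊗ W) (G.obj Y)).hom ≫ (G.obj X ◁ xc Y) ≫
          G₂ X ((V ⊗ W) ⊗ Y) =
        (xh X ▷ G.obj Y) ≫ G₂ (X ⊗ (V ⊗ W)) Y ≫
          G.map (α_ X (V ⊗ W) Y).hom) := by
  obtain rfl : xc = tensorRightCoaction G vc wc := funext hxc
  obtain rfl : xh = tensorLeftCoaction G vh wh := funext hxh
  exact ⟨tensorRightCoaction_coassoc G Gc₂ (fun f Z => by simpa using hGcnat f (𝟙 Z))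
      vc wc hvcnat hvc hwc,
    tensorRightCoaction_counit G ε hεnat vc wc hvce hwce,
    tensorLeftCoaction_coassoc G Gh₂ (fun X _ _ g => by simpa using hGhnat (𝟙 X) g)
      vh wh hwhnat hvh hwh,
    tensorLeftCoaction_counit G ε hεnat vh wh hvhe hwhe,
    tensorCoaction_compat G G₂
      (naturality_of_eq_comp_map_whiskerRight_counit G Gc₂ hGcnat ε hεnat G₂ hG₂check)
      vc vh hvcompat wc wh hwcompat⟩

/-- The monoidal product of two comodules over a multiplier bicomonad
`(G, Gc₂, Gh₂, ε)` is again a comodule, via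
`xc_Y := (1_V ⊗ wc_Y) ≫ vc_{W⊗Y}` and `xh_X := (vh_X ⊗ 1_W) ≫ wh_{X⊗V}`;
in particular the compatibility condition between `xc` and `xh` holds. -/
theorem comodule_tensor_of_multiplierBicomonad
    (G : C ⥤ C)
    (Gc₂ : ∀ X Y : C, G.obj X ⊗ G.obj Y ⟶ G.obj (G.obj X ⊗ Y))
    (Gh₂ : ∀ X Y : C, G.obj X ⊗ G.obj Y ⟶ G.obj (X ⊗ G.obj Y))
    (ε : ∀ X : C, G.obj X ⟶ X)
    -- naturality
    (hGcnat : ∀ {X X' Y Y' : C} (f : X ⟶ X') (g : Y ⟶ Y'),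
      (G.map f ⊗ₘ G.map g) ≫ Gc₂ X' Y' = Gc₂ X Y ≫ G.map (G.map f ⊗ₘ g))
    (hGhnat : ∀ {X X' Y Y' : C} (f : X ⟶ X') (g : Y ⟶ Y'),
      (G.map f ⊗ₘ G.map g) ≫ Gh₂ X' Y' = Gh₂ X Y ≫ G.map (f ⊗ₘ G.map g))
    (hεnat : ∀ {X Y : C} (f : X ⟶ Y), G.map f ≫ ε Y = ε X ≫ f)
    -- right multiplier bicomonad axioms for `Gc₂`
    (hGcassoc : ∀ X Y Z : C,
      (α_ (G.obj X) (G.obj Y) (G.obj Z)).hom ≫ (G.obj X ◁ Gc₂ Y Z) ≫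
          Gc₂ X (G.obj Y ⊗ Z) ≫
          G.map ((α_ (G.obj X) (G.obj Y) Z).inv ≫ (Gc₂ X Y ▷ Z)) =
        (Gc₂ X Y ▷ G.obj Z) ≫ Gc₂ (G.obj X ⊗ Y) Z)
    (hGccou : ∀ X Y : C, Gc₂ X Y ≫ ε (G.obj X ⊗ Y) = G.obj X ◁ ε Y)
    -- left multiplier bicomonad axioms for `Gh₂`
    (hGhassoc : ∀ X Y Z : C,
      (Gh₂ X Y ▷ G.obj Z) ≫ Gh₂ (X ⊗ G.obj Y) Z ≫
          G.map ((α_ X (G.obj Y) (G.obj Z)).hom ≫ (X ◁ Gh₂ Y Z)) =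
        (α_ (G.obj X) (G.obj Y) (G.obj Z)).hom ≫ (G.obj X ◁ Gh₂ Y Z) ≫
          Gh₂ X (Y ⊗ G.obj Z))
    (hGhcou : ∀ X Y : C, Gh₂ X Y ≫ ε (X ⊗ G.obj Y) = ε X ▷ G.obj Y)
    -- the two induced semimonoidal structures coincide; call the common value `G₂`
    (G₂ : ∀ X Y : C, G.obj X ⊗ G.obj Y ⟶ G.obj (X ⊗ Y))
    (hG₂check : ∀ X Y : C, G₂ X Y = Gc₂ X Y ≫ G.map (ε X ▷ Y))
    (hG₂hat : ∀ X Y : C, G₂ X Y = Gh₂ X Y ≫ G.map (X ◁ ε Y))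
    -- the second compatibility condition of a multiplier bicomonad
    (hGcompat : ∀ X Y Z : C,
      (α_ (G.obj X) (G.obj Y) (G.obj Z)).hom ≫ (G.obj X ◁ Gc₂ Y Z) ≫
          G₂ X (G.obj Y ⊗ Z) =
        (Gh₂ X Y ▷ G.obj Z) ≫ G₂ (X ⊗ G.obj Y) Z ≫
          G.map (α_ X (G.obj Y) Z).hom)
    -- a comodule `(V, vc, vh)`
    (V : C)
    (vc : ∀ Y : C, V ⊗ G.obj Y ⟶ G.obj (V ⊗ Y))
    (vh : ∀ X : C, G.obj X ⊗ V ⟶ G.obj (X ⊗ V))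
    (hvcnat : ∀ {Y Y' : C} (g : Y ⟶ Y'),
      (V ◁ G.map g) ≫ vc Y' = vc Y ≫ G.map (V ◁ g))
    (hvhnat : ∀ {X X' : C} (f : X ⟶ X'),
      (G.map f ▷ V) ≫ vh X' = vh X ≫ G.map (f ▷ V))
    (hvc : ∀ Y Z : C,
      (α_ V (G.obj Y) (G.obj Z)).hom ≫ (V ◁ Gc₂ Y Z) ≫ vc (G.obj Y ⊗ Z) ≫
          G.map ((α_ V (G.obj Y) Z).inv ≫ (vc Y ▷ Z)) =
        (vc Y ▷ G.obj Z) ≫ Gc₂ (V ⊗ Y) Z)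
    (hvce : ∀ Y : C, vc Y ≫ ε (V ⊗ Y) = V ◁ ε Y)
    (hvh : ∀ X Y : C,
      (Gh₂ X Y ▷ V) ≫ vh (X ⊗ G.obj Y) ≫
          G.map ((α_ X (G.obj Y) V).hom ≫ (X ◁ vh Y)) =
        (α_ (G.obj X) (G.obj Y) V).hom ≫ (G.obj X ◁ vh Y) ≫ Gh₂ X (Y ⊗ V))
    (hvhe : ∀ Y : C, vh Y ≫ ε (Y ⊗ V) = ε Y ▷ V)
    (hvcompat : ∀ X Y : C,
      (α_ (G.obj X) V (G.obj Y)).hom ≫ (G.obj X ◁ vc Y) ≫ G₂ X (V ⊗ Y) =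
        (vh X ▷ G.obj Y) ≫ G₂ (X ⊗ V) Y ≫ G.map (α_ X V Y).hom)
    -- a comodule `(W, wc, wh)`
    (W : C)
    (wc : ∀ Y : C, W ⊗ G.obj Y ⟶ G.obj (W ⊗ Y))
    (wh : ∀ X : C, G.obj X ⊗ W ⟶ G.obj (X ⊗ W))
    (hwcnat : ∀ {Y Y' : C} (g : Y ⟶ Y'),
      (W ◁ G.map g) ≫ wc Y' = wc Y ≫ G.map (W ◁ g))
    (hwhnat : ∀ {X X' : C} (f : X ⟶ X'),
      (G.map f ▷ W) ≫ wh X' = wh X ≫ G.map (f ▷ W))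
    (hwc : ∀ Y Z : C,
      (α_ W (G.obj Y) (G.obj Z)).hom ≫ (W ◁ Gc₂ Y Z) ≫ wc (G.obj Y ⊗ Z) ≫
          G.map ((α_ W (G.obj Y) Z).inv ≫ (wc Y ▷ Z)) =
        (wc Y ▷ G.obj Z) ≫ Gc₂ (W ⊗ Y) Z)
    (hwce : ∀ Y : C, wc Y ≫ ε (W ⊗ Y) = W ◁ ε Y)
    (hwh : ∀ X Y : C,
      (Gh₂ X Y ▷ W) ≫ wh (X ⊗ G.obj Y) ≫
          G.map ((α_ X (G.obj Y) W).hom ≫ (X ◁ wh Y)) =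
        (α_ (G.obj X) (G.obj Y) W).hom ≫ (G.obj X ◁ wh Y) ≫ Gh₂ X (Y ⊗ W))
    (hwhe : ∀ Y : C, wh Y ≫ ε (Y ⊗ W) = ε Y ▷ W)
    (hwcompat : ∀ X Y : C,
      (α_ (G.obj X) W (G.obj Y)).hom ≫ (G.obj X ◁ wc Y) ≫ G₂ X (W ⊗ Y) =
        (wh X ▷ G.obj Y) ≫ G₂ (X ⊗ W) Y ≫ G.map (α_ X W Y).hom)
    -- the candidate comodule structure on `V ⊗ W`
    (xc : ∀ Y : C, (V ⊗ W) ⊗ G.obj Y ⟶ G.obj ((V ⊗ W) ⊗ Y))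
    (hxc : ∀ Y : C, xc Y =
      (α_ V W (G.obj Y)).hom ≫ (V ◁ wc Y) ≫ vc (W ⊗ Y) ≫ G.map (α_ V W Y).inv)
    (xh : ∀ X : C, G.obj X ⊗ (V ⊗ W) ⟶ G.obj (X ⊗ (V ⊗ W)))
    (hxh : ∀ X : C, xh X =
      (α_ (G.obj X) V W).inv ≫ (vh X ▷ W) ≫ wh (X ⊗ V) ≫ G.map (α_ X V W).hom) :
    -- `(V ⊗ W, xc)` is a comodule over the right multiplier bicomonad
    (∀ Y Z : C,
      (α_ (V ⊗ W) (G.obj Y) (G.obj Z)).hom ≫ ((V ⊗ W) ◁ Gc₂ Y Z) ≫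
          xc (G.obj Y ⊗ Z) ≫
          G.map ((α_ (V ⊗ W) (G.obj Y) Z).inv ≫ (xc Y ▷ Z)) =
        (xc Y ▷ G.obj Z) ≫ Gc₂ ((V ⊗ W) ⊗ Y) Z) ∧
    (∀ Y : C, xc Y ≫ ε ((V ⊗ W) ⊗ Y) = (V ⊗ W) ◁ ε Y) ∧
    -- `(V ⊗ W, xh)` is a comodule over the left multiplier bicomonad
    (∀ X Y : C,
      (Gh₂ X Y ▷ (V ⊗ W)) ≫ xh (X ⊗ G.obj Y) ≫
          G.map ((α_ X (G.obj Y) (V ⊗ W)).hom ≫ (X ◁ xh Y)) =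
        (α_ (G.obj X) (G.obj Y) (V ⊗ W)).hom ≫ (G.obj X ◁ xh Y) ≫
          Gh₂ X (Y ⊗ (V ⊗ W))) ∧
    (∀ Y : C, xh Y ≫ ε (Y ⊗ (V ⊗ W)) = ε Y ▷ (V ⊗ W)) ∧
    -- in particular, the compatibility between `xc` and `xh` holds
    (∀ X Y : C,
      (α_ (G.obj X) (V ⊗ W) (G.obj Y)).hom ≫ (G.obj X ◁ xc Y) ≫
          G₂ X ((V ⊗ W) ⊗ Y) =
        (xh X ▷ G.obj Y) ≫ G₂ (X ⊗ (V ⊗ W)) Y ≫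
          G.map (α_ X (V ⊗ W) Y).hom) :=
  comodule_tensor_of_multiplierBicomonad_general G Gc₂ Gh₂ ε hGcnat hGhnat hεnat G₂ hG₂check V vc vh
    hvcnat hvc hvce hvh hvhe hvcompat W wc wh hwhnat hwc hwce hwh hwhe hwcompat xc hxc xh hxh
end
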